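/- arXiv:1805.06058 — 8 statements merged into one kernel-verified Lean document; each statement's English description precedes it below -/
import Mathlib

section
/- For all integers t > 2 and all positive integers m and n, the (t,2) broadcast domination number of the m × n grid graph satisfies γ_{t,2}(G_{m,n}) ≤ ⌊(m + 2(t−2))(n + 2(t−2)) / (2(t−1)²)⌋. -/
set_option linter.unusedVariables false
set_option maxHeartbeats 1000000


/-- The `m × n` grid graph: vertices `{0,…,m−1} × {0,…,n−1}`, two vertices adjacent
iff they differ by exactly `1` in exactly one coordinate. -/
def gridGraph (m n : ℕ) : SimpleGraph (Fin m × Fin n) :=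
  SimpleGraph.fromRel (fun u v =>
    (u.1 = v.1 ∧ (u.2 : ℕ) + 1 = (v.2 : ℕ)) ∨ (u.2 = v.2 ∧ (u.1 : ℕ) + 1 = (v.1 : ℕ)))

/-- `S` is a `(t,2)` broadcast on `G`: every vertex receives total signal at least `2`,
where a tower `T` supplies signal `max (t - dist T v) 0` (here `ℕ`-subtraction truncates). -/
def IsBroadcast {V : Type*} (G : SimpleGraph V) (t : ℕ) (S : Finset V) : Prop :=
  ∀ v : V, 2 ≤ ∑ T ∈ S, (t - G.dist T v)

/-- The `(t,2)` broadcast domination number: the minimum cardinality of a `(t,2)` broadcast. -/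
noncomputable def broadcastNumber {V : Type*} (G : SimpleGraph V) (t : ℕ) : ℕ :=
  sInf {k | ∃ S : Finset V, IsBroadcast G t S ∧ S.card = k}

def clampI (a : ℤ) (k : ℕ) : ℤ := max 0 (min a ((k:ℤ)-1))

def clampPt (m n : ℕ) (p : ℤ × ℤ) : ℤ × ℤ := (clampI p.1 m, clampI p.2 n)

def toGrid (m n : ℕ) (hm : 0 < m) (hn : 0 < n) (p : ℤ × ℤ) : Fin m × Fin n :=
  (⟨(clampI p.1 m).toNat, by unfold clampI; omega⟩,
   ⟨(clampI p.2 n).toNat, by unfold clampI; omega⟩)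

def vZ {m n : ℕ} (v : Fin m × Fin n) : ℤ × ℤ := ((v.1 : ℤ), (v.2 : ℤ))

def L1 (a b : ℤ × ℤ) : ℕ := (a.1 - b.1).natAbs + (a.2 - b.2).natAbs

def rho (s : ℕ) (p : ℤ × ℤ) : ℤ × ℤ := ((p.1 + p.2) % (2 * s), p.2 % s)

lemma toGrid_cast (m n : ℕ) (hm : 0 < m) (hn : 0 < n) (p : ℤ × ℤ) :
    vZ (toGrid m n hm hn p) = clampPt m n p := by
  unfold vZ toGrid clampPt
  have h1 : ((clampI p.1 m).toNat : ℤ) = clampI p.1 m := Int.toNat_of_nonneg (le_max_left _ _)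
  have h2 : ((clampI p.2 n).toNat : ℤ) = clampI p.2 n := Int.toNat_of_nonneg (le_max_left _ _)
  simp only [Fin.val_mk, h1, h2]

def natStep (a c i : ℕ) : ℕ := if a ≤ c then min (a + i) c else max (a - i) c

lemma walk_of_chain {V : Type*} (G : SimpleGraph V) (f : ℕ → V) (k : ℕ)
    (h : ∀ i, i < k → f (i + 1) = f i ∨ G.Adj (f i) (f (i + 1))) :
    ∃ p : G.Walk (f 0) (f k), p.length ≤ k := by
  induction k with
  | zero => exact ⟨.nil, by simp⟩
  | succ k ih =>
    obtain ⟨p, hp⟩ := ih (fun i hi => h i (by omega))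
    rcases h k (by omega) with he | ha
    · exact ⟨p.copy rfl he.symm, by rw [SimpleGraph.Walk.length_copy]; omega⟩
    · exact ⟨p.concat ha, by rw [SimpleGraph.Walk.length_concat]; omega⟩

lemma grid_adj_x (m n : ℕ) (x y : Fin m) (b : Fin n)
    (h : (x : ℕ) + 1 = y ∨ (y : ℕ) + 1 = x) : (gridGraph m n).Adj (x, b) (y, b) := by
  rw [gridGraph, SimpleGraph.fromRel_adj]
  constructor
  · intro hc
    injection hc with h1 h2
    have : (x : ℕ) = (y : ℕ) := by rw [h1]
    omega
  · rcases h with h | h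
    · exact Or.inl (Or.inr ⟨rfl, h⟩)
    · exact Or.inr (Or.inr ⟨rfl, h⟩)

lemma grid_adj_y (m n : ℕ) (a : Fin m) (x y : Fin n)
    (h : (x : ℕ) + 1 = y ∨ (y : ℕ) + 1 = x) : (gridGraph m n).Adj (a, x) (a, y) := by
  rw [gridGraph, SimpleGraph.fromRel_adj]
  constructor
  · intro hc
    injection hc with h1 h2
    have : (x : ℕ) = (y : ℕ) := by rw [h2]
    omega
  · rcases h with h | h
    · exact Or.inl (Or.inl ⟨rfl, h⟩)
    · exact Or.inr (Or.inl ⟨rfl, h⟩)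

lemma grid_dist_le (m n : ℕ) (u w : Fin m × Fin n) :
    (gridGraph m n).dist u w ≤ L1 (vZ u) (vZ w) := by
  have hL : L1 (vZ u) (vZ w) = Nat.dist u.1 w.1 + Nat.dist u.2 w.2 := by
    unfold L1 vZ Nat.dist; omega
  rw [hL]
  set dx := Nat.dist u.1.val w.1.val with hdx
  set dy := Nat.dist u.2.val w.2.val with hdy
  have hsx : ∀ i, natStep u.1.val w.1.val i < m := by
    intro i; unfold natStep; split <;> omega
  have hsy : ∀ i, natStep u.2.val w.2.val i < n := by
    intro i; unfold natStep; split <;> omega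
  set f : ℕ → Fin m × Fin n := fun i =>
    (⟨natStep u.1.val w.1.val i, hsx i⟩, ⟨natStep u.2.val w.2.val (i - dx), hsy _⟩) with hf
  have h0 : f 0 = u := by
    simp only [hf]
    have e1 : natStep u.1.val w.1.val 0 = u.1.val := by unfold natStep; split <;> omega
    have e2 : natStep u.2.val w.2.val 0 = u.2.val := by unfold natStep; split <;> omega
    simp only [Nat.zero_sub, e1, e2]
  have hk : f (dx + dy) = w := by
    simp only [hf]
    have e1 : natStep u.1.val w.1.val (dx + dy) = w.1.val := by
      unfold natStep; rw [hdx]; unfold Nat.dist; split <;> omega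
    have e2 : natStep u.2.val w.2.val (dx + dy - dx) = w.2.val := by
      unfold natStep; rw [hdx, hdy]; unfold Nat.dist; split <;> omega
    simp only [e1, e2]
  have hchain : ∀ i, i < dx + dy → f (i + 1) = f i ∨ (gridGraph m n).Adj (f i) (f (i + 1)) := by
    intro i hi
    by_cases hix : i < dx
    · -- x moves, y fixed at index 0
      have hyeq : (i + 1) - dx = i - dx := by omega
      have hxstep : natStep u.1.val w.1.val (i+1) = natStep u.1.val w.1.val i + 1
          ∨ natStep u.1.val w.1.val i = natStep u.1.val w.1.val (i+1) + 1 := by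
        unfold natStep; rw [hdx] at hix; unfold Nat.dist at hix; split <;> omega
      right
      simp only [hf, hyeq]
      rcases hxstep with h | h
      · exact grid_adj_x m n _ _ _ (Or.inl (by simp [h]))
      · exact grid_adj_x m n _ _ _ (Or.inr (by simp [h]))
    · -- x fixed, y moves
      push_neg at hix
      have hxeq : natStep u.1.val w.1.val (i+1) = natStep u.1.val w.1.val i := by
        unfold natStep; rw [hdx] at hix; unfold Nat.dist at hix; split <;> omega
      have hyi : (i + 1) - dx = (i - dx) + 1 := by omega
      have hylt : i - dx < dy := by omega
      have hystep : natStep u.2.val w.2.val (i - dx + 1) = natStep u.2.val w.2.val (i - dx) + 1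
          ∨ natStep u.2.val w.2.val (i - dx) = natStep u.2.val w.2.val (i - dx + 1) + 1 := by
        unfold natStep; rw [hdy] at hylt; unfold Nat.dist at hylt; split <;> omega
      right
      simp only [hf, hyi, hxeq]
      rcases hystep with h | h
      · exact grid_adj_y m n _ _ _ (Or.inl (by simp [h]))
      · exact grid_adj_y m n _ _ _ (Or.inr (by simp [h]))
  obtain ⟨p, hp⟩ := walk_of_chain (gridGraph m n) f (dx + dy) hchain
  calc (gridGraph m n).dist u w = (gridGraph m n).dist (f 0) (f (dx+dy)) := by rw [h0, hk]
    _ ≤ p.length := SimpleGraph.dist_le p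
    _ ≤ dx + dy := hp

lemma vZ_range {m n : ℕ} (v : Fin m × Fin n) :
    0 ≤ (vZ v).1 ∧ (vZ v).1 ≤ (m:ℤ) - 1 ∧ 0 ≤ (vZ v).2 ∧ (vZ v).2 ≤ (n:ℤ) - 1 := by
  have h1 := v.1.isLt
  have h2 := v.2.isLt
  unfold vZ
  omega

lemma clampI_spec (a : ℤ) (k : ℕ) (hk : 0 < k) :
    (a < 0 ∧ clampI a k = 0) ∨ (0 ≤ a ∧ a ≤ (k:ℤ)-1 ∧ clampI a k = a) ∨
      ((k:ℤ)-1 < a ∧ clampI a k = (k:ℤ)-1) := by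
  unfold clampI; omega

lemma clamp_coord_le (a va : ℤ) (k : ℕ) (hva : 0 ≤ va) (hva2 : va ≤ (k:ℤ) - 1) :
    (clampI a k - va).natAbs ≤ (a - va).natAbs := by
  have hk : 0 < k := by omega
  rcases clampI_spec a k hk with ⟨h1, h2⟩ | ⟨h1, h1b, h2⟩ | ⟨h1, h2⟩ <;> rw [h2] <;> omega

lemma clamp_coord_eq (a b va : ℤ) (k : ℕ) (hva : 0 ≤ va) (hva2 : va ≤ (k:ℤ) - 1)
    (hne : a ≠ b) (he : clampI a k = clampI b k) :
    (clampI a k - va).natAbs + 1 ≤ max ((a - va).natAbs) ((b - va).natAbs) := by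
  have hk : 0 < k := by omega
  rcases clampI_spec a k hk with ⟨h1, h2⟩ | ⟨h1, h1b, h2⟩ | ⟨h1, h2⟩ <;>
    rcases clampI_spec b k hk with ⟨g1, g2⟩ | ⟨g1, g1b, g2⟩ | ⟨g1, g2⟩ <;>
      rw [h2, g2] at he <;> rw [h2] <;> omega

lemma clamp_L1_le (m n : ℕ) (p : ℤ × ℤ) (v : Fin m × Fin n) :
    L1 (clampPt m n p) (vZ v) ≤ L1 p (vZ v) := by
  obtain ⟨a1, a2, a3, a4⟩ := vZ_range v
  have h1 := clamp_coord_le p.1 (vZ v).1 m a1 a2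
  have h2 := clamp_coord_le p.2 (vZ v).2 n a3 a4
  simp only [L1, clampPt]
  generalize clampI p.1 m = c1 at h1 ⊢
  generalize clampI p.2 n = c2 at h2 ⊢
  omega

lemma dist_toGrid_le (m n : ℕ) (hm : 0 < m) (hn : 0 < n) (p : ℤ × ℤ) (v : Fin m × Fin n) :
    (gridGraph m n).dist (toGrid m n hm hn p) v ≤ L1 (clampPt m n p) (vZ v) := by
  have := grid_dist_le m n (toGrid m n hm hn p) v
  rwa [toGrid_cast] at this

lemma merge_strict (m n : ℕ) (hm : 0 < m) (hn : 0 < n) (p q : ℤ × ℤ) (v : Fin m × Fin n)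
    (hne : p ≠ q) (heq : toGrid m n hm hn p = toGrid m n hm hn q) :
    L1 (clampPt m n p) (vZ v) + 1 ≤ max (L1 p (vZ v)) (L1 q (vZ v)) := by
  have hcl : clampPt m n p = clampPt m n q := by
    rw [← toGrid_cast m n hm hn p, ← toGrid_cast m n hm hn q, heq]
  obtain ⟨a1, a2, a3, a4⟩ := vZ_range v
  have hne' : p.1 ≠ q.1 ∨ p.2 ≠ q.2 := by
    by_contra hc
    push_neg at hc
    exact hne (Prod.ext hc.1 hc.2)
  have hc1 : clampI p.1 m = clampI q.1 m := congrArg Prod.fst hcl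
  have hc2 : clampI p.2 n = clampI q.2 n := congrArg Prod.snd hcl
  have h2a := clamp_coord_le p.2 (vZ v).2 n a3 a4
  have h2b : (clampI p.2 n - (vZ v).2).natAbs ≤ (q.2 - (vZ v).2).natAbs := by
    rw [hc2]; exact clamp_coord_le q.2 (vZ v).2 n a3 a4
  have h1a := clamp_coord_le p.1 (vZ v).1 m a1 a2
  have h1b : (clampI p.1 m - (vZ v).1).natAbs ≤ (q.1 - (vZ v).1).natAbs := by
    rw [hc1]; exact clamp_coord_le q.1 (vZ v).1 m a1 a2
  simp only [L1, clampPt]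
  rcases hne' with hne' | hne'
  · have h1 := clamp_coord_eq p.1 q.1 (vZ v).1 m a1 a2 hne' hc1
    generalize clampI p.1 m = c1 at h1a h1b h1 ⊢
    generalize clampI p.2 n = c2 at h2a h2b ⊢
    omega
  · have h2 := clamp_coord_eq p.2 q.2 (vZ v).2 n a3 a4 hne' hc2
    generalize clampI p.1 m = c1 at h1a h1b ⊢
    generalize clampI p.2 n = c2 at h2a h2b h2 ⊢
    omega

lemma signal_single {V : Type*} (G : SimpleGraph V) (t : ℕ) (S : Finset V) (v T : V)
    (hT : T ∈ S) (h : 2 ≤ t - G.dist T v) : 2 ≤ ∑ x ∈ S, (t - G.dist x v) :=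
  le_trans h (Finset.single_le_sum (f := fun x => t - G.dist x v) (fun i _ => Nat.zero_le _) hT)

lemma signal_pair {V : Type*} [DecidableEq V] (G : SimpleGraph V) (t : ℕ) (S : Finset V) (v T1 T2 : V)
    (hT1 : T1 ∈ S) (hT2 : T2 ∈ S) (hne : T1 ≠ T2)
    (h1 : 1 ≤ t - G.dist T1 v) (h2 : 1 ≤ t - G.dist T2 v) :
    2 ≤ ∑ x ∈ S, (t - G.dist x v) := by
  have hsub : ({T1, T2} : Finset V) ⊆ S := by
    intro x hx
    rcases Finset.mem_insert.1 hx with h | h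
    · rwa [h]
    · rw [Finset.mem_singleton.1 h]; exact hT2
  calc 2 ≤ (t - G.dist T1 v) + (t - G.dist T2 v) := by omega
    _ = ∑ x ∈ ({T1, T2} : Finset V), (t - G.dist x v) := (Finset.sum_pair (f := fun x => t - G.dist x v) hne).symm
    _ ≤ ∑ x ∈ S, (t - G.dist x v) :=
        Finset.sum_le_sum_of_subset hsub

/-- Finish: one tower whose `ℤ`-point is within `s-1`. -/
lemma single_finish (t s m n : ℕ) (hm : 0 < m) (hn : 0 < n) (hts : t = s + 1)
    (S : Finset (Fin m × Fin n)) (v : Fin m × Fin n) (P : ℤ × ℤ)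
    (hPS : toGrid m n hm hn P ∈ S) (hP : L1 P (vZ v) + 1 ≤ s) :
    2 ≤ ∑ T ∈ S, (t - (gridGraph m n).dist T v) := by
  apply signal_single _ _ _ _ _ hPS
  have h1 := dist_toGrid_le m n hm hn P v
  have h2 := clamp_L1_le m n P v
  generalize L1 (clampPt m n P) (vZ v) = A at h1 h2
  generalize L1 P (vZ v) = B at h2 hP
  omega

/-- Finish: two distinct `ℤ`-towers within `s`. -/
lemma pair_finish (t s m n : ℕ) (hm : 0 < m) (hn : 0 < n) (hts : t = s + 1)
    (S : Finset (Fin m × Fin n)) (v : Fin m × Fin n) (P Q : ℤ × ℤ)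
    (hPS : toGrid m n hm hn P ∈ S) (hQS : toGrid m n hm hn Q ∈ S) (hne : P ≠ Q)
    (hP : L1 P (vZ v) ≤ s) (hQ : L1 Q (vZ v) ≤ s) :
    2 ≤ ∑ T ∈ S, (t - (gridGraph m n).dist T v) := by
  by_cases hg : toGrid m n hm hn P = toGrid m n hm hn Q
  · apply signal_single _ _ _ _ _ hPS
    have h1 := dist_toGrid_le m n hm hn P v
    have h2 := merge_strict m n hm hn P Q v hne hg
    generalize L1 (clampPt m n P) (vZ v) = A at h1 h2
    generalize L1 P (vZ v) = B at h2 hP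
    generalize L1 Q (vZ v) = C at h2 hQ
    omega
  · apply signal_pair _ _ _ _ _ _ hPS hQS hg
    · have h1 := dist_toGrid_le m n hm hn P v
      have h2 := clamp_L1_le m n P v
      generalize L1 (clampPt m n P) (vZ v) = A at h1 h2
      generalize L1 P (vZ v) = B at h2 hP
      omega
    · have h1 := dist_toGrid_le m n hm hn Q v
      have h2 := clamp_L1_le m n Q v
      generalize L1 (clampPt m n Q) (vZ v) = A at h1 h2
      generalize L1 Q (vZ v) = B at h2 hQ
      omega

lemma path_dist_le_col (n : ℕ) (a b : Fin 1 × Fin n) :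
    (gridGraph 1 n).dist a b ≤ Nat.dist (a.2 : ℕ) (b.2 : ℕ) := by
  have h := grid_dist_le 1 n a b
  have h1 : (a.1 : ℕ) = 0 := by omega
  have h2 : (b.1 : ℕ) = 0 := by omega
  unfold L1 vZ Nat.dist at *
  omega

lemma path_dist_le_row (m : ℕ) (a b : Fin m × Fin 1) :
    (gridGraph m 1).dist a b ≤ Nat.dist (a.1 : ℕ) (b.1 : ℕ) := by
  have h := grid_dist_le m 1 a b
  have h1 : (a.2 : ℕ) = 0 := by omega
  have h2 : (b.2 : ℕ) = 0 := by omega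
  unfold L1 vZ Nat.dist at *
  omega

lemma oneD_col (t s n : ℕ) (hts : t = s + 1) (hs : 2 ≤ s) (hn : 0 < n) :
    ∃ S : Finset (Fin 1 × Fin n), IsBroadcast (gridGraph 1 n) t S ∧
      S.card * (2 * s * s) ≤ (2 * s - 1) * (n + 2 * s - 2) := by
  set K := (n + 2 * s) / (2 * s) with hK
  have hspos : 0 < 2 * s := by omega
  have hKu : 2 * s * K ≤ n + 2 * s := by
    rw [hK, mul_comm]
    exact Nat.div_mul_le_self _ _
  have hK1 : n < 2 * s * K := by
    have h1 := Nat.div_add_mod (n + 2 * s) (2 * s)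
    have h2 := Nat.mod_lt (n + 2 * s) hspos
    rw [hK]
    linarith [h1, h2]
  have hτlt : ∀ k : ℕ, min (s - 1 + 2 * s * k) (n - 1) < n := by intro k; omega
  set τ : ℕ → Fin 1 × Fin n := fun k =>
    ((0 : Fin 1), (⟨min (s - 1 + 2 * s * k) (n - 1), hτlt k⟩ : Fin n)) with hτ
  have hτval : ∀ k : ℕ, ((τ k).2 : ℕ) = min (s - 1 + 2 * s * k) (n - 1) := fun k => rfl
  refine ⟨(Finset.range K).image τ, ?_, ?_⟩
  · -- broadcast
    intro v
    obtain ⟨v1, j⟩ := v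
    have hjlt : (j : ℕ) < n := j.isLt
    obtain ⟨k₀, r, hj, hr⟩ : ∃ k r, (j : ℕ) = 2 * s * k + r ∧ r < 2 * s :=
      ⟨(j : ℕ) / (2 * s), (j : ℕ) % (2 * s), (Nat.div_add_mod _ _).symm, Nat.mod_lt _ hspos⟩
    have hk₀lt : k₀ < K := by
      have : 2 * s * k₀ < 2 * s * K := by omega
      exact Nat.lt_of_mul_lt_mul_left this
    have hrel : 2 * s * (k₀ + 1) = 2 * s * k₀ + 2 * s := by ring
    by_cases hrc : r ≤ 2 * s - 2
    · -- single tower k₀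
      apply signal_single _ _ _ _ (τ k₀)
        (Finset.mem_image_of_mem τ (Finset.mem_range.2 hk₀lt))
      have hd : (gridGraph 1 n).dist (τ k₀) (v1, j) ≤ Nat.dist ((τ k₀).2 : ℕ) (j : ℕ) :=
        path_dist_le_col n (τ k₀) (v1, j)
      rw [hτval k₀] at hd
      unfold Nat.dist at hd
      omega
    · -- r = 2s-1 : towers k₀ and k₀+1
      have hr' : r = 2 * s - 1 := by omega
      have hk₁lt : k₀ + 1 < K := by
        have : 2 * s * (k₀ + 1) < 2 * s * K := by omega
        exact Nat.lt_of_mul_lt_mul_left this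
      by_cases hlast : s - 1 + 2 * s * (k₀ + 1) ≤ n - 1
      · apply signal_pair _ _ _ _ (τ k₀) (τ (k₀ + 1))
          (Finset.mem_image_of_mem τ (Finset.mem_range.2 hk₀lt))
          (Finset.mem_image_of_mem τ (Finset.mem_range.2 hk₁lt))
        · intro hcontra
          have hval : ((τ k₀).2 : ℕ) = ((τ (k₀ + 1)).2 : ℕ) := by rw [hcontra]
          rw [hτval k₀, hτval (k₀ + 1)] at hval
          omega
        · have hd : (gridGraph 1 n).dist (τ k₀) (v1, j) ≤ Nat.dist ((τ k₀).2 : ℕ) (j : ℕ) :=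
            path_dist_le_col n (τ k₀) (v1, j)
          rw [hτval k₀] at hd
          unfold Nat.dist at hd
          omega
        · have hd : (gridGraph 1 n).dist (τ (k₀ + 1)) (v1, j) ≤ Nat.dist ((τ (k₀ + 1)).2 : ℕ) (j : ℕ) :=
            path_dist_le_col n (τ (k₀ + 1)) (v1, j)
          rw [hτval (k₀ + 1)] at hd
          unfold Nat.dist at hd
          omega
      · -- last tower clamped to n-1, distance ≤ s-1
        apply signal_single _ _ _ _ (τ (k₀ + 1))
          (Finset.mem_image_of_mem τ (Finset.mem_range.2 hk₁lt))
        have hd : (gridGraph 1 n).dist (τ (k₀ + 1)) (v1, j) ≤ Nat.dist ((τ (k₀ + 1)).2 : ℕ) (j : ℕ) :=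
          path_dist_le_col n (τ (k₀ + 1)) (v1, j)
        rw [hτval (k₀ + 1)] at hd
        unfold Nat.dist at hd
        omega
  · -- cardinality
    have hcard : ((Finset.range K).image τ).card ≤ K :=
      le_trans Finset.card_image_le (le_of_eq (Finset.card_range K))
    have hmain : K * (2 * s * s) ≤ (2 * s - 1) * (n + 2 * s - 2) := by
      by_cases hsmall : n < 2 * s
      · have hK1' : K = 1 := by
          rw [hK]
          apply Nat.div_eq_of_lt_le <;> omega
        rw [hK1', one_mul]
        zify [show (1:ℕ) ≤ 2*s by omega, show (2:ℕ) ≤ n + 2*s by omega]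
        nlinarith [hn, hs, sq_nonneg ((s:ℤ) - 1)]
      · push_neg at hsmall
        have h1 : K * (2 * s * s) = (2 * s * K) * s := by ring
        have h2 : (2 * s * K) * s ≤ (n + 2 * s) * s :=
          Nat.mul_le_mul_right s hKu
        have h3 : (n + 2 * s) * s ≤ (2 * s - 1) * (n + 2 * s - 2) := by
          zify [show (1:ℕ) ≤ 2*s by omega, show (2:ℕ) ≤ n + 2*s by omega]
          nlinarith [hsmall, hs, mul_nonneg (by omega : (0:ℤ) ≤ (s:ℤ)) (by
            have : (2*s:ℕ) ≤ n := hsmall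
            omega : (0:ℤ) ≤ (s:ℤ) - 2)]
        omega
    calc ((Finset.range K).image τ).card * (2 * s * s) ≤ K * (2 * s * s) :=
          Nat.mul_le_mul_right _ hcard
      _ ≤ _ := hmain
lemma oneD_row (t s m : ℕ) (hts : t = s + 1) (hs : 2 ≤ s) (hm : 0 < m) :
    ∃ S : Finset (Fin m × Fin 1), IsBroadcast (gridGraph m 1) t S ∧
      S.card * (2 * s * s) ≤ (2 * s - 1) * (m + 2 * s - 2) := by
  set K := (m + 2 * s) / (2 * s) with hK
  have hspos : 0 < 2 * s := by omega
  have hKu : 2 * s * K ≤ m + 2 * s := by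
    rw [hK, mul_comm]
    exact Nat.div_mul_le_self _ _
  have hK1 : m < 2 * s * K := by
    have h1 := Nat.div_add_mod (m + 2 * s) (2 * s)
    have h2 := Nat.mod_lt (m + 2 * s) hspos
    rw [hK]
    linarith [h1, h2]
  have hτlt : ∀ k : ℕ, min (s - 1 + 2 * s * k) (m - 1) < m := by intro k; omega
  set τ : ℕ → Fin m × Fin 1 := fun k =>
    ((⟨min (s - 1 + 2 * s * k) (m - 1), hτlt k⟩ : Fin m), (0 : Fin 1)) with hτ
  have hτval : ∀ k : ℕ, ((τ k).1 : ℕ) = min (s - 1 + 2 * s * k) (m - 1) := fun k => rfl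
  refine ⟨(Finset.range K).image τ, ?_, ?_⟩
  · -- broadcast
    intro v
    obtain ⟨j, v1⟩ := v
    have hjlt : (j : ℕ) < m := j.isLt
    obtain ⟨k₀, r, hj, hr⟩ : ∃ k r, (j : ℕ) = 2 * s * k + r ∧ r < 2 * s :=
      ⟨(j : ℕ) / (2 * s), (j : ℕ) % (2 * s), (Nat.div_add_mod _ _).symm, Nat.mod_lt _ hspos⟩
    have hk₀lt : k₀ < K := by
      have : 2 * s * k₀ < 2 * s * K := by omega
      exact Nat.lt_of_mul_lt_mul_left this
    have hrel : 2 * s * (k₀ + 1) = 2 * s * k₀ + 2 * s := by ring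
    by_cases hrc : r ≤ 2 * s - 2
    · -- single tower k₀
      apply signal_single _ _ _ _ (τ k₀)
        (Finset.mem_image_of_mem τ (Finset.mem_range.2 hk₀lt))
      have hd : (gridGraph m 1).dist (τ k₀) (j, v1) ≤ Nat.dist ((τ k₀).1 : ℕ) (j : ℕ) :=
        path_dist_le_row m (τ k₀) (j, v1)
      rw [hτval k₀] at hd
      unfold Nat.dist at hd
      omega
    · -- r = 2s-1 : towers k₀ and k₀+1
      have hr' : r = 2 * s - 1 := by omega
      have hk₁lt : k₀ + 1 < K := by
        have : 2 * s * (k₀ + 1) < 2 * s * K := by omega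
        exact Nat.lt_of_mul_lt_mul_left this
      by_cases hlast : s - 1 + 2 * s * (k₀ + 1) ≤ m - 1
      · apply signal_pair _ _ _ _ (τ k₀) (τ (k₀ + 1))
          (Finset.mem_image_of_mem τ (Finset.mem_range.2 hk₀lt))
          (Finset.mem_image_of_mem τ (Finset.mem_range.2 hk₁lt))
        · intro hcontra
          have hval : ((τ k₀).1 : ℕ) = ((τ (k₀ + 1)).1 : ℕ) := by rw [hcontra]
          rw [hτval k₀, hτval (k₀ + 1)] at hval
          omega
        · have hd : (gridGraph m 1).dist (τ k₀) (j, v1) ≤ Nat.dist ((τ k₀).1 : ℕ) (j : ℕ) :=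
            path_dist_le_row m (τ k₀) (j, v1)
          rw [hτval k₀] at hd
          unfold Nat.dist at hd
          omega
        · have hd : (gridGraph m 1).dist (τ (k₀ + 1)) (j, v1) ≤ Nat.dist ((τ (k₀ + 1)).1 : ℕ) (j : ℕ) :=
            path_dist_le_row m (τ (k₀ + 1)) (j, v1)
          rw [hτval (k₀ + 1)] at hd
          unfold Nat.dist at hd
          omega
      · -- last tower clamped to n-1, distance ≤ s-1
        apply signal_single _ _ _ _ (τ (k₀ + 1))
          (Finset.mem_image_of_mem τ (Finset.mem_range.2 hk₁lt))
        have hd : (gridGraph m 1).dist (τ (k₀ + 1)) (j, v1) ≤ Nat.dist ((τ (k₀ + 1)).1 : ℕ) (j : ℕ) :=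
          path_dist_le_row m (τ (k₀ + 1)) (j, v1)
        rw [hτval (k₀ + 1)] at hd
        unfold Nat.dist at hd
        omega
  · -- cardinality
    have hcard : ((Finset.range K).image τ).card ≤ K :=
      le_trans Finset.card_image_le (le_of_eq (Finset.card_range K))
    have hmain : K * (2 * s * s) ≤ (2 * s - 1) * (m + 2 * s - 2) := by
      by_cases hsmall : m < 2 * s
      · have hK1' : K = 1 := by
          rw [hK]
          apply Nat.div_eq_of_lt_le <;> omega
        rw [hK1', one_mul]
        zify [show (1:ℕ) ≤ 2*s by omega, show (2:ℕ) ≤ m + 2*s by omega]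
        nlinarith [hm, hs, sq_nonneg ((s:ℤ) - 1)]
      · push_neg at hsmall
        have h1 : K * (2 * s * s) = (2 * s * K) * s := by ring
        have h2 : (2 * s * K) * s ≤ (m + 2 * s) * s :=
          Nat.mul_le_mul_right s hKu
        have h3 : (m + 2 * s) * s ≤ (2 * s - 1) * (m + 2 * s - 2) := by
          zify [show (1:ℕ) ≤ 2*s by omega, show (2:ℕ) ≤ m + 2*s by omega]
          nlinarith [hsmall, hs, mul_nonneg (by omega : (0:ℤ) ≤ (s:ℤ)) (by
            have : (2*s:ℕ) ≤ m := hsmall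
            omega : (0:ℤ) ≤ (s:ℤ) - 2)]
        omega
    calc ((Finset.range K).image τ).card * (2 * s * s) ≤ K * (2 * s * s) :=
          Nat.mul_le_mul_right _ hcard
      _ ≤ _ := hmain

lemma rho_mem (s : ℕ) (hs : 0 < s) (p : ℤ × ℤ) :
    0 ≤ (rho s p).1 ∧ (rho s p).1 < 2 * (s:ℤ) ∧ 0 ≤ (rho s p).2 ∧ (rho s p).2 < (s:ℤ) := by
  unfold rho
  have h2s : (0:ℤ) < 2 * (s:ℤ) := by positivity
  have hsz : (0:ℤ) < (s:ℤ) := by exact_mod_cast hs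
  exact ⟨Int.emod_nonneg _ (by omega), Int.emod_lt_of_pos _ h2s,
    Int.emod_nonneg _ (by omega), Int.emod_lt_of_pos _ hsz⟩

lemma coset_shift (s : ℕ) (p q : ℤ × ℤ) (a b : ℤ)
    (h1 : q.1 = p.1 + (a + b) * (s:ℤ)) (h2 : q.2 = p.2 + (a - b) * (s:ℤ)) :
    rho s q = rho s p := by
  unfold rho
  have e1 : q.1 + q.2 = (p.1 + p.2) + (2 * (s:ℤ)) * a := by rw [h1, h2]; ring
  have e2 : q.2 = p.2 + (s:ℤ) * (a - b) := by rw [h2]; ring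
  rw [e1, e2, Int.add_mul_emod_self_left, Int.add_mul_emod_self_left]

lemma near_mult (M x : ℤ) (hM : 0 < M) : ∃ k r, x = 2 * M * k + r ∧ -M ≤ r ∧ r < M := by
  have hpos : (0:ℤ) < 2 * M := by omega
  have hdm := Int.mul_ediv_add_emod (x + M) (2 * M)
  have hnn := Int.emod_nonneg (x + M) (by omega : 2 * M ≠ 0)
  have hlt := Int.emod_lt_of_pos (x + M) hpos
  exact ⟨(x + M) / (2 * M), (x + M) % (2 * M) - M, by linarith, by linarith, by linarith⟩

lemma exists_fiber_le {α β : Type*} [DecidableEq α] [DecidableEq β] (s : Finset α) (f : α → β)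
    (D : Finset β) (hD : D.Nonempty) (h : ∀ a ∈ s, f a ∈ D) :
    ∃ d ∈ D, (s.filter (fun a => f a = d)).card ≤ s.card / D.card := by
  by_contra hc
  push_neg at hc
  have hsum : s.card = ∑ d ∈ D, (s.filter (fun a => f a = d)).card :=
    Finset.card_eq_sum_card_fiberwise h
  have hlow : D.card * (s.card / D.card + 1) ≤ ∑ d ∈ D, (s.filter (fun a => f a = d)).card := by
    calc D.card * (s.card / D.card + 1) = ∑ _d ∈ D, (s.card / D.card + 1) := by
          rw [Finset.sum_const, smul_eq_mul]
      _ ≤ _ := Finset.sum_le_sum (fun d hd => hc d hd)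
  have hgt : s.card < D.card * (s.card / D.card + 1) :=
    Nat.lt_mul_div_succ _ (Finset.card_pos.2 hD)
  omega

lemma L1_shift (v : ℤ × ℤ) (x y : ℤ) : L1 (v.1 - x, v.2 - y) v = x.natAbs + y.natAbs := by
  unfold L1
  simp only
  rw [show v.1 - x - v.1 = -x by ring, show v.2 - y - v.2 = -y by ring,
    Int.natAbs_neg, Int.natAbs_neg]

theorem gamma_t2_grid_upper (t m n : ℕ) (ht : 2 < t) (hm : 0 < m) (hn : 0 < n) :
    broadcastNumber (gridGraph m n) t
      ≤ (m + 2 * (t - 2)) * (n + 2 * (t - 2)) / (2 * (t - 1) ^ 2) := by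
  obtain ⟨s, hts, hs⟩ : ∃ s, t = s + 1 ∧ 2 ≤ s := ⟨t - 1, by omega, by omega⟩
  have hnum1 : m + 2 * (t - 2) = m + 2 * s - 2 := by omega
  have hnum2 : n + 2 * (t - 2) = n + 2 * s - 2 := by omega
  have hden : 2 * (t - 1) ^ 2 = 2 * s * s := by
    have h1 : t - 1 = s := by omega
    rw [h1, pow_two]; ring
  rw [hnum1, hnum2, hden]
  have hfin : ∀ S : Finset (Fin m × Fin n), IsBroadcast (gridGraph m n) t S →
      ∀ c : ℕ, S.card ≤ c → broadcastNumber (gridGraph m n) t ≤ c :=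
    fun S hb c hc => le_trans (Nat.sInf_le ⟨S, hb, rfl⟩) hc
  by_cases hm1 : m = 1
  · subst hm1
    obtain ⟨S, hb, hcard⟩ := oneD_col t s n hts hs hn
    apply hfin S hb
    rw [Nat.le_div_iff_mul_le (by positivity)]
    have h12 : 1 + 2 * s - 2 = 2 * s - 1 := by omega
    rw [h12]
    exact hcard
  by_cases hn1 : n = 1
  · subst hn1
    obtain ⟨S, hb, hcard⟩ := oneD_row t s m hts hs hm
    apply hfin S hb
    rw [Nat.le_div_iff_mul_le (by positivity)]
    have h12 : 1 + 2 * s - 2 = 2 * s - 1 := by omega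
    rw [h12, mul_comm (m + 2 * s - 2) (2 * s - 1)]
    exact hcard
  -- main case : m, n ≥ 2
  have hm2 : 2 ≤ m := by omega
  have hn2 : 2 ≤ n := by omega
  have hs0 : 0 < s := by omega
  set Bf : Finset (ℤ × ℤ) :=
    Finset.Ico (1 - (s:ℤ)) ((m:ℤ) + s - 1) ×ˢ Finset.Ico (1 - (s:ℤ)) ((n:ℤ) + s - 1) with hBf
  set D : Finset (ℤ × ℤ) := Finset.Ico (0:ℤ) (2 * (s:ℤ)) ×ˢ Finset.Ico (0:ℤ) ((s:ℤ)) with hD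
  have hmemBf : ∀ p : ℤ × ℤ, p ∈ Bf ↔ (1 - (s:ℤ) ≤ p.1 ∧ p.1 < (m:ℤ) + s - 1 ∧
      1 - (s:ℤ) ≤ p.2 ∧ p.2 < (n:ℤ) + s - 1) := by
    intro p
    rw [hBf, Finset.mem_product, Finset.mem_Ico, Finset.mem_Ico]
    tauto
  have hmaps : ∀ p ∈ Bf, rho s p ∈ D := by
    intro p _
    obtain ⟨h1, h2, h3, h4⟩ := rho_mem s hs0 p
    rw [hD, Finset.mem_product, Finset.mem_Ico, Finset.mem_Ico]
    exact ⟨⟨h1, h2⟩, h3, h4⟩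
  have hDne : D.Nonempty := by
    refine ⟨(0, 0), ?_⟩
    rw [hD, Finset.mem_product, Finset.mem_Ico, Finset.mem_Ico]
    refine ⟨⟨le_refl _, by positivity⟩, le_refl _, by positivity⟩
  have hDcard : D.card = 2 * s * s := by
    rw [hD, Finset.card_product, Int.card_Ico, Int.card_Ico]
    have e1 : ((2 * (s:ℤ)) - 0).toNat = 2 * s := by omega
    have e2 : (((s:ℤ)) - 0).toNat = s := by omega
    rw [e1, e2]
  have hBcard : Bf.card = (m + 2 * s - 2) * (n + 2 * s - 2) := by
    rw [hBf, Finset.card_product, Int.card_Ico, Int.card_Ico]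
    have e1 : (((m:ℤ) + s - 1) - (1 - (s:ℤ))).toNat = m + 2 * s - 2 := by omega
    have e2 : (((n:ℤ) + s - 1) - (1 - (s:ℤ))).toNat = n + 2 * s - 2 := by omega
    rw [e1, e2]
  obtain ⟨d, hdD, hfib⟩ := exists_fiber_le Bf (rho s) D hDne hmaps
  obtain ⟨d1, d2⟩ := d
  rw [hD, Finset.mem_product, Finset.mem_Ico, Finset.mem_Ico] at hdD
  obtain ⟨⟨hd1a, hd1b⟩, hd2a, hd2b⟩ := hdD
  set S : Finset (Fin m × Fin n) :=
    (Bf.filter (fun p => rho s p = (d1, d2))).image (toGrid m n hm hn) with hSdef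
  refine hfin S ?_ _ (le_trans Finset.card_image_le (le_trans hfib (by rw [hBcard, hDcard])))
  -- broadcast property
  intro v
  obtain ⟨a1, a2, a3, a4⟩ := vZ_range v
  have hmemS : ∀ p : ℤ × ℤ, 1 - (s:ℤ) ≤ p.1 → p.1 < (m:ℤ) + s - 1 →
      1 - (s:ℤ) ≤ p.2 → p.2 < (n:ℤ) + s - 1 → rho s p = (d1, d2) →
      toGrid m n hm hn p ∈ S := by
    intro p h1 h2 h3 h4 h5
    apply Finset.mem_image_of_mem
    rw [Finset.mem_filter]
    exact ⟨(hmemBf p).2 ⟨h1, h2, h3, h4⟩, h5⟩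
  set p₀ : ℤ × ℤ := (d1 - d2, d2) with hp₀
  have hrp₀ : rho s p₀ = (d1, d2) := by
    unfold rho
    rw [hp₀]
    simp only
    rw [show d1 - d2 + d2 = d1 by ring]
    rw [Int.emod_eq_of_lt hd1a hd1b, Int.emod_eq_of_lt hd2a hd2b]
  have hspos : (0:ℤ) < (s:ℤ) := by exact_mod_cast hs0
  obtain ⟨k1, α, hα, hα1, hα2⟩ :=
    near_mult (s:ℤ) (((vZ v).1 + (vZ v).2) - (p₀.1 + p₀.2)) hspos
  obtain ⟨k2, β, hβ, hβ1, hβ2⟩ :=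
    near_mult (s:ℤ) (((vZ v).1 - (vZ v).2) - (p₀.1 - p₀.2)) hspos
  obtain ⟨e, he⟩ : ∃ e, α + β = 2 * e :=
    ⟨(vZ v).1 - p₀.1 - (s:ℤ) * (k1 + k2), by linear_combination -hα - hβ⟩
  obtain ⟨f, hf⟩ : ∃ f, α - β = 2 * f :=
    ⟨(vZ v).2 - p₀.2 - (s:ℤ) * (k1 - k2), by linear_combination -hα + hβ⟩
  -- generic coset membership for shifted towers
  have hshift : ∀ (X Y a b : ℤ), 2 * X = 2 * ((vZ v).1 - p₀.1 - (a + b) * (s:ℤ)) →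
      2 * Y = 2 * ((vZ v).2 - p₀.2 - (a - b) * (s:ℤ)) →
      rho s ((vZ v).1 - X, (vZ v).2 - Y) = (d1, d2) := by
    intro X Y a b h1 h2
    rw [← hrp₀]
    have hp1 : p₀.1 = d1 - d2 := rfl
    have hp2 : p₀.2 = d2 := rfl
    apply coset_shift s p₀ _ a b
    · simp only
      linarith [hp1, h1]
    · simp only
      linarith [hp2, h2]
  rcases hα1.eq_or_lt with hαeq | hαgt
  · rcases hβ1.eq_or_lt with hβeq | hβgt
    · -- case C : α = β = -s ; double tie
      have he' : e = -(s:ℤ) := by omega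
      have hf' : f = 0 := by omega
      -- horizontal tower T1 and vertical tower T2
      rcases le_or_gt ((vZ v).1) ((m:ℤ) - 2) with hx | hx
      · rcases le_or_gt ((vZ v).2) ((n:ℤ) - 2) with hy | hy
        · refine pair_finish t s m n hm hn hts S v
            ((vZ v).1 - -(s:ℤ), (vZ v).2 - 0) ((vZ v).1 - 0, (vZ v).2 - -(s:ℤ))
            (hmemS _ (by omega) (by omega) (by omega) (by omega)
              (hshift _ _ k1 k2 (by linear_combination -hα - hβ - he - 2 * he')
                (by linear_combination -hα + hβ - hf - 2 * hf')))
            (hmemS _ (by omega) (by omega) (by omega) (by omega)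
              (hshift _ _ k1 (k2 - 1) (by linear_combination -hα - hβ - he - 2 * he')
                (by linear_combination -hα + hβ - hf - 2 * hf')))
            (by intro hq; rw [Prod.mk.injEq] at hq; have := hq.1; omega)
            (by rw [L1_shift]; omega) (by rw [L1_shift]; omega)
        · refine pair_finish t s m n hm hn hts S v
            ((vZ v).1 - -(s:ℤ), (vZ v).2 - 0) ((vZ v).1 - 0, (vZ v).2 - (s:ℤ))
            (hmemS _ (by omega) (by omega) (by omega) (by omega)
              (hshift _ _ k1 k2 (by linear_combination -hα - hβ - he - 2 * he')
                (by linear_combination -hα + hβ - hf - 2 * hf')))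
            (hmemS _ (by omega) (by omega) (by omega) (by omega)
              (hshift _ _ (k1 - 1) k2 (by linear_combination -hα - hβ - he - 2 * he')
                (by linear_combination -hα + hβ - hf - 2 * hf')))
            (by intro hq; rw [Prod.mk.injEq] at hq; have := hq.1; omega)
            (by rw [L1_shift]; omega) (by rw [L1_shift]; omega)
      · rcases le_or_gt ((vZ v).2) ((n:ℤ) - 2) with hy | hy
        · refine pair_finish t s m n hm hn hts S v
            ((vZ v).1 - (s:ℤ), (vZ v).2 - 0) ((vZ v).1 - 0, (vZ v).2 - -(s:ℤ))
            (hmemS _ (by omega) (by omega) (by omega) (by omega)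
              (hshift _ _ (k1 - 1) (k2 - 1) (by linear_combination -hα - hβ - he - 2 * he')
                (by linear_combination -hα + hβ - hf - 2 * hf')))
            (hmemS _ (by omega) (by omega) (by omega) (by omega)
              (hshift _ _ k1 (k2 - 1) (by linear_combination -hα - hβ - he - 2 * he')
                (by linear_combination -hα + hβ - hf - 2 * hf')))
            (by intro hq; rw [Prod.mk.injEq] at hq; have := hq.1; omega)
            (by rw [L1_shift]; omega) (by rw [L1_shift]; omega)
        · refine pair_finish t s m n hm hn hts S v
            ((vZ v).1 - (s:ℤ), (vZ v).2 - 0) ((vZ v).1 - 0, (vZ v).2 - (s:ℤ))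
            (hmemS _ (by omega) (by omega) (by omega) (by omega)
              (hshift _ _ (k1 - 1) (k2 - 1) (by linear_combination -hα - hβ - he - 2 * he')
                (by linear_combination -hα + hβ - hf - 2 * hf')))
            (hmemS _ (by omega) (by omega) (by omega) (by omega)
              (hshift _ _ (k1 - 1) k2 (by linear_combination -hα - hβ - he - 2 * he')
                (by linear_combination -hα + hβ - hf - 2 * hf')))
            (by intro hq; rw [Prod.mk.injEq] at hq; have := hq.1; omega)
            (by rw [L1_shift]; omega) (by rw [L1_shift]; omega)
    · -- case B : α = -s, β > -s ; tie in first diagonal coordinate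
      refine pair_finish t s m n hm hn hts S v
        ((vZ v).1 - e, (vZ v).2 - f) ((vZ v).1 - (e + s), (vZ v).2 - (f + s))
        (hmemS _ (by omega) (by omega) (by omega) (by omega)
          (hshift _ _ k1 k2 (by linear_combination -hα - hβ - he)
            (by linear_combination -hα + hβ - hf)))
        (hmemS _ (by omega) (by omega) (by omega) (by omega)
          (hshift _ _ (k1 - 1) k2 (by linear_combination -hα - hβ - he)
            (by linear_combination -hα + hβ - hf)))
        (by intro hq; rw [Prod.mk.injEq] at hq; have := hq.1; omega)
        (by rw [L1_shift]; omega) (by rw [L1_shift]; omega)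
  · rcases hβ1.eq_or_lt with hβeq | hβgt
    · -- case B' : β = -s, α > -s ; tie in second diagonal coordinate
      refine pair_finish t s m n hm hn hts S v
        ((vZ v).1 - e, (vZ v).2 - f) ((vZ v).1 - (e + s), (vZ v).2 - (f - s))
        (hmemS _ (by omega) (by omega) (by omega) (by omega)
          (hshift _ _ k1 k2 (by linear_combination -hα - hβ - he)
            (by linear_combination -hα + hβ - hf)))
        (hmemS _ (by omega) (by omega) (by omega) (by omega)
          (hshift _ _ k1 (k2 - 1) (by linear_combination -hα - hβ - he)
            (by linear_combination -hα + hβ - hf)))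
        (by intro hq; rw [Prod.mk.injEq] at hq; have := hq.1; omega)
        (by rw [L1_shift]; omega) (by rw [L1_shift]; omega)
    · -- case A : single tower within s - 1
      refine single_finish t s m n hm hn hts S v
        ((vZ v).1 - e, (vZ v).2 - f)
        (hmemS _ (by omega) (by omega) (by omega) (by omega)
          (hshift _ _ k1 k2 (by linear_combination -hα - hβ - he)
            (by linear_combination -hα + hβ - hf)))
        (by rw [L1_shift]; omega)
end

section
/- For all integers t > 2 and all positive integers m, the (t,2) broadcast domination number of the path graph on m vertices satisfies γ_{t,2}(G_{m,1}) ≤ ⌊(m + 2(t−2))(1 + 2(t−2)) / (2(t−1)²)⌋. -/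
/-- The path graph on `m` vertices `{0,…,m−1}`, with `i ~ j` iff `|i − j| = 1`. -/
def pathGraph' (m : ℕ) : SimpleGraph (Fin m) :=
  SimpleGraph.fromRel (fun i j => (i : ℕ) + 1 = (j : ℕ))

lemma pathGraph'_adj {m : ℕ} (u v : Fin m) (h : (u : ℕ) + 1 = v) :
    (pathGraph' m).Adj u v := by
  refine ⟨?_, Or.inl h⟩
  intro he; subst he; omega

lemma path_walk (m i k : ℕ) (h : i + k < m) :
    ∃ w : (pathGraph' m).Walk ⟨i, by omega⟩ ⟨i + k, h⟩, w.length = k := by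
  induction k with
  | zero => exact ⟨SimpleGraph.Walk.nil.copy rfl (by ext; simp), by simp⟩
  | succ k ih =>
    obtain ⟨w, hw⟩ := ih (by omega)
    refine ⟨w.concat (pathGraph'_adj _ _ (by simp [Nat.add_assoc])), ?_⟩
    simp [SimpleGraph.Walk.length_concat, hw]

lemma path_dist_le {m : ℕ} (u v : Fin m) (h : (u : ℕ) ≤ v) :
    (pathGraph' m).dist u v ≤ (v : ℕ) - u := by
  obtain ⟨w, hw⟩ := path_walk m u ((v : ℕ) - u) (by omega)
  have he : (⟨(u : ℕ) + ((v:ℕ) - u), by omega⟩ : Fin m) = v := by ext; simp; omega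
  have hd := SimpleGraph.dist_le w
  rw [hw, he] at hd
  simpa using hd

lemma path_dist_le' {m : ℕ} (u v : Fin m) :
    (pathGraph' m).dist u v ≤ max ((u:ℕ) - v) ((v:ℕ) - u) := by
  rcases le_total (u:ℕ) (v:ℕ) with h | h
  · exact le_trans (path_dist_le u v h) (le_max_right _ _)
  · rw [SimpleGraph.dist_comm]
    exact le_trans (path_dist_le v u h) (le_max_left _ _)

theorem gamma_t2_path_upper (t m : ℕ) (ht : 2 < t) (hm : 0 < m) :
    broadcastNumber (pathGraph' m) t
      ≤ (m + 2 * (t - 2)) * (1 + 2 * (t - 2)) / (2 * (t - 1) ^ 2) := by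
  set d := 2 * t - 3 with hd_def
  have hd : 0 < d := by omega
  set n := (m + d - 1) / d with hn_def
  -- n * d ≥ m
  have hnd : m ≤ n * d := by
    have h1 : n * d + (m + d - 1) % d = m + d - 1 := Nat.div_add_mod' _ _
    have h2 : (m + d - 1) % d < d := Nat.mod_lt _ hd
    obtain ⟨nd, hnd'⟩ : ∃ x, n * d = x := ⟨_, rfl⟩
    rw [hnd'] at h1 ⊢
    omega
  -- tower positions
  have hp : ∀ i : ℕ, min (i * d + (t - 2)) (m - 1) < m := fun i => by omega
  set f : ℕ → Fin m := fun i => ⟨min (i * d + (t - 2)) (m - 1), hp i⟩ with hf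
  set S : Finset (Fin m) := (Finset.range n).image f with hS
  have hB : IsBroadcast (pathGraph' m) t S := by
    intro v
    set i := (v : ℕ) / d with hi
    have hiv1 : i * d ≤ (v : ℕ) := Nat.div_mul_le_self _ _
    have hiv2 : (v : ℕ) < i * d + d := by
      have h1 : i * d + (v : ℕ) % d = (v : ℕ) := Nat.div_add_mod' _ _
      have h2 : (v : ℕ) % d < d := Nat.mod_lt _ hd
      obtain ⟨A, hA⟩ : ∃ x, i * d = x := ⟨_, rfl⟩
      rw [hA] at h1 ⊢
      omega
    have hin : i < n := by
      rw [hi, hn_def]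
      rw [Nat.div_lt_iff_lt_mul hd]
      calc (v : ℕ) < m := v.isLt
      _ ≤ n * d := hnd
    have hmem : f i ∈ S := Finset.mem_image_of_mem f (Finset.mem_range.mpr hin)
    have hdist : (pathGraph' m).dist (f i) v ≤ t - 2 := by
      refine le_trans (path_dist_le' (f i) v) ?_
      have hvm : (v : ℕ) ≤ m - 1 := by have := v.isLt; omega
      have hfi : (f i : ℕ) = min (i * d + (t - 2)) (m - 1) := rfl
      obtain ⟨A, hA⟩ : ∃ x, i * d = x := ⟨_, rfl⟩
      rw [hA] at hiv1 hiv2 hfi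
      omega
    have hone : 2 ≤ t - (pathGraph' m).dist (f i) v := by omega
    calc 2 ≤ t - (pathGraph' m).dist (f i) v := hone
    _ ≤ ∑ T ∈ S, (t - (pathGraph' m).dist T v) :=
        Finset.single_le_sum (f := fun T => t - (pathGraph' m).dist T v)
          (fun _ _ => Nat.zero_le _) hmem
  have hcard : S.card ≤ n := le_trans (Finset.card_image_le) (by simp)
  have hmain : broadcastNumber (pathGraph' m) t ≤ S.card :=
    Nat.sInf_le ⟨S, hB, rfl⟩
  refine le_trans hmain (le_trans hcard ?_)
  -- arithmetic: n ≤ (m + d - 1) * d / (2*(t-1)^2)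
  have h1 : m + 2 * (t - 2) = m + d - 1 := by omega
  have h2 : 1 + 2 * (t - 2) = d := by omega
  rw [h1, h2]
  have hD : 0 < 2 * (t - 1) ^ 2 := by
    have : 0 < t - 1 := by omega
    positivity
  rw [Nat.le_div_iff_mul_le hD]
  have hdd : 2 * (t - 1) ^ 2 ≤ d * d := by
    simp only [hd_def]
    zify [show 1 ≤ t by omega, show 3 ≤ 2 * t by omega]
    nlinarith [sq_nonneg ((t : ℤ) - 3)]
  calc n * (2 * (t - 1) ^ 2) ≤ n * (d * d) := Nat.mul_le_mul_left _ hdd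
  _ = (n * d) * d := by ring
  _ ≤ (m + d - 1) * d := Nat.mul_le_mul_right _ (Nat.div_mul_le_self _ _)
end

section
/- For all integers t > 2, k ≥ 1, and all positive integers m with m ≤ 2k(t−1) − 1, the path graph on m vertices admits a (t,2) broadcast of cardinality at most k; that is, γ_{t,2}(G_{m,1}) ≤ k. (k tower vertices spaced at intervals of 2(t−1) suffice.) -/
lemma pathGraph'_adj_s4 {m a : ℕ} (h : a + 1 < m) :
    (pathGraph' m).Adj ⟨a, by omega⟩ ⟨a + 1, h⟩ := by
  rw [pathGraph', SimpleGraph.fromRel_adj]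
  exact ⟨by simp [Fin.ext_iff], Or.inl rfl⟩

lemma pathGraph'_walk {m : ℕ} : ∀ b a (hab : a ≤ b) (hb : b < m),
    ∃ p : (pathGraph' m).Walk ⟨a, by omega⟩ ⟨b, hb⟩, p.length = b - a := by
  intro b
  induction b with
  | zero => intro a hab hb; interval_cases a; exact ⟨SimpleGraph.Walk.nil, rfl⟩
  | succ n ih =>
    intro a hab hb
    rcases Nat.lt_or_ge a (n+1) with h | h
    · obtain ⟨p, hp⟩ := ih a (by omega) (by omega)
      exact ⟨p.concat (pathGraph'_adj_s4 hb), by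
        rw [SimpleGraph.Walk.length_concat, hp]; omega⟩
    · have : a = n + 1 := by omega
      subst this
      exact ⟨SimpleGraph.Walk.nil, by simp⟩

lemma path_dist_le_s4 {m a b : ℕ} (hab : a ≤ b) (ha : a < m) (hb : b < m) :
    (pathGraph' m).dist ⟨a, ha⟩ ⟨b, hb⟩ ≤ b - a := by
  obtain ⟨p, hp⟩ := pathGraph'_walk b a hab hb
  exact hp ▸ SimpleGraph.dist_le p

lemma path_dist_le'_s4 {m w a : ℕ} (hw : w < m) (ha : a < m) :
    (pathGraph' m).dist ⟨w, hw⟩ ⟨a, ha⟩ ≤ max w a - min w a := by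
  rcases le_total w a with h | h
  · have := path_dist_le_s4 h hw ha; omega
  · have := path_dist_le_s4 h ha hw
    rw [SimpleGraph.dist_comm]; omega

lemma one_tower {V : Type*} [DecidableEq V] {S : Finset V} {g : V → ℕ} {w : V}
    (hw : w ∈ S) (h2 : 2 ≤ g w) : 2 ≤ ∑ x ∈ S, g x :=
  le_trans h2 (Finset.single_le_sum (fun _ _ => Nat.zero_le _) hw)

lemma two_tower {V : Type*} [DecidableEq V] {S : Finset V} {g : V → ℕ} {w1 w2 : V}
    (hw1 : w1 ∈ S) (hw2 : w2 ∈ S) (hne : w1 ≠ w2) (h2 : 2 ≤ g w1 + g w2) :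
    2 ≤ ∑ x ∈ S, g x := by
  refine le_trans h2 ?_
  rw [← Finset.sum_pair hne]
  refine Finset.sum_le_sum_of_subset ?_
  intro x hx
  simp only [Finset.mem_insert, Finset.mem_singleton] at hx
  rcases hx with rfl | rfl <;> assumption

theorem gamma_t2_path_le_k (t k m : ℕ) (ht : 2 < t) (hk : 1 ≤ k) (hm : 0 < m)
    (hmk : m ≤ 2 * k * (t - 1) - 1) :
    broadcastNumber (pathGraph' m) t ≤ k := by
  obtain ⟨s, rfl⟩ : ∃ s, t = s + 3 := ⟨t - 3, by omega⟩
  -- tower positions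
  set f : Fin k → Fin m := fun i => ⟨min (((i : Fin k) : ℕ) * (2*s+4) + s + 1) (m-1), by omega⟩ with hf
  have hm' : m + 1 ≤ k * (2*s+4) := by
    have e1 : s + 3 - 1 = s + 2 := rfl
    rw [e1] at hmk
    have e2 : 2 * k * (s + 2) = k * (2*s+4) := by ring
    have e3 : 1 * (2*s+4) ≤ k * (2*s+4) := Nat.mul_le_mul_right _ hk
    omega
  have hfval : ∀ (j : ℕ) (hj : j < k) (w : ℕ) (hwm : w < m),
      w = min (j * (2*s+4) + s + 1) (m-1) → f ⟨j, hj⟩ = ⟨w, hwm⟩ := by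
    intro j hj w hwm hw
    apply Fin.ext
    simp [hf, hw]
  have hbro : IsBroadcast (pathGraph' m) (s+3) (Finset.image f Finset.univ) := by
    intro v
    obtain ⟨a, ha⟩ := v
    rcases Nat.lt_or_ge a (s+1) with hA | hA
    · -- leftmost tower covers
      have hwm : min (0 * (2*s+4) + s + 1) (m-1) < m := by omega
      refine one_tower (Finset.mem_image_of_mem f (Finset.mem_univ ⟨0, hk⟩)) ?_
      rw [hfval 0 hk _ hwm rfl]
      have hd := path_dist_le'_s4 hwm ha
      omega
    · set q := (a - (s+1)) / (2*s+4) with hq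
      set r := (a - (s+1)) % (2*s+4) with hr
      have hqr : a = q * (2*s+4) + (s+1) + r := by
        have h1 := Nat.div_add_mod (a - (s+1)) (2*s+4)
        rw [← hq, ← hr] at h1
        have h2 : (2*s+4) * q = q * (2*s+4) := Nat.mul_comm _ _
        omega
      have hrlt : r < 2*s+4 := Nat.mod_lt _ (by omega)
      have hqk : q < k := by
        by_contra hcon
        push_neg at hcon
        have := Nat.mul_le_mul_right (2*s+4) hcon
        omega
      rcases le_or_gt r (s+1) with hB | hB
      · -- single tower p q
        have hwm : q * (2*s+4) + s + 1 < m := by omega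
        have hwe : q * (2*s+4) + s + 1 = min (q * (2*s+4) + s + 1) (m-1) := by omega
        refine one_tower (Finset.mem_image_of_mem f (Finset.mem_univ ⟨q, hqk⟩)) ?_
        rw [hfval q hqk _ hwm hwe]
        have hd := path_dist_le'_s4 hwm ha
        omega
      · -- r ≥ s+2
        have hsucc : (q+1) * (2*s+4) = q * (2*s+4) + (2*s+4) := by ring
        have hq1k : q + 1 < k := by
          by_contra hcon
          push_neg at hcon
          have := Nat.mul_le_mul_right (2*s+4) hcon
          omega
        rcases Nat.lt_or_ge ((q+1) * (2*s+4) + s + 1) m with hC | hC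
        · -- two real towers p q and p (q+1)
          have hwm1 : q * (2*s+4) + s + 1 < m := by omega
          have hwe1 : q * (2*s+4) + s + 1 = min (q * (2*s+4) + s + 1) (m-1) := by omega
          have hwm2 : (q+1) * (2*s+4) + s + 1 < m := hC
          have hwe2 : (q+1) * (2*s+4) + s + 1 = min ((q+1) * (2*s+4) + s + 1) (m-1) := by omega
          refine two_tower (Finset.mem_image_of_mem f (Finset.mem_univ ⟨q, by omega⟩))
            (Finset.mem_image_of_mem f (Finset.mem_univ ⟨q+1, hq1k⟩)) ?_ ?_
          · rw [hfval q (by omega) _ hwm1 hwe1, hfval (q+1) hq1k _ hwm2 hwe2]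
            intro he
            have h' : q * (2*s+4) + s + 1 = (q+1) * (2*s+4) + s + 1 := congrArg Fin.val he
            omega
          · rw [hfval q (by omega) _ hwm1 hwe1, hfval (q+1) hq1k _ hwm2 hwe2]
            have hd1 := path_dist_le'_s4 hwm1 ha
            have hd2 := path_dist_le'_s4 hwm2 ha
            omega
        · -- clipped tower at m-1
          have hwm : m - 1 < m := by omega
          have hwe : m - 1 = min ((q+1) * (2*s+4) + s + 1) (m-1) := by omega
          refine one_tower (Finset.mem_image_of_mem f (Finset.mem_univ ⟨q+1, hq1k⟩)) ?_
          rw [hfval (q+1) hq1k _ hwm hwe]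
          have hd := path_dist_le'_s4 hwm ha
          omega
  calc broadcastNumber (pathGraph' m) (s+3)
      ≤ (Finset.image f Finset.univ).card :=
        Nat.sInf_le ⟨Finset.image f Finset.univ, hbro, rfl⟩
    _ ≤ k := le_trans Finset.card_image_le (by rw [Finset.card_univ, Fintype.card_fin])
end

section
/- Let t > 2 and m, n ≥ 2 be integers. For every vertex (i,j) ∈ ℤ² with 0 ≤ i ≤ m−1 and 0 ≤ j ≤ n−1, the towers of the rectilinear tower set T_t lying in the enlarged rectangle {(x,y) ∈ ℤ² : −(t−2) ≤ x ≤ m+t−3, −(t−2) ≤ y ≤ n+t−3} supply total signal at least 2 to (i,j); that is, Σ_{(x,y) ∈ T_t, −(t−2) ≤ x ≤ m+t−3, −(t−2) ≤ y ≤ n+t−3} max(t − (|i−x| + |j−y|), 0) ≥ 2. -/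
/-- The rectilinear tower set `T_t ⊆ ℤ²`: points `(i,j)` with `2(t−1) ∣ i+j` and `2(t−1) ∣ i−j`. -/
def rectTowers (t : ℕ) : Set (ℤ × ℤ) :=
  {p | (2 * ((t : ℤ) - 1)) ∣ (p.1 + p.2) ∧ (2 * ((t : ℤ) - 1)) ∣ (p.1 - p.2)}

instance (t : ℕ) : DecidablePred (· ∈ rectTowers t) := fun p =>
  inferInstanceAs (Decidable ((2 * ((t : ℤ) - 1)) ∣ (p.1 + p.2) ∧ (2 * ((t : ℤ) - 1)) ∣ (p.1 - p.2)))

private lemma two_le_sum_single {S : Finset (ℤ × ℤ)} {g : ℤ × ℤ → ℤ}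
    (hg : ∀ p ∈ S, 0 ≤ g p) {a : ℤ × ℤ} (ha : a ∈ S) (h2 : 2 ≤ g a) :
    2 ≤ ∑ p ∈ S, g p :=
  h2.trans (Finset.single_le_sum hg ha)

private lemma two_le_sum_pair {S : Finset (ℤ × ℤ)} {g : ℤ × ℤ → ℤ}
    (hg : ∀ p ∈ S, 0 ≤ g p) {a b : ℤ × ℤ} (hab : a ≠ b) (ha : a ∈ S) (hb : b ∈ S)
    (h1 : 1 ≤ g a) (h2 : 1 ≤ g b) : 2 ≤ ∑ p ∈ S, g p := by
  have hsub : ({a, b} : Finset (ℤ × ℤ)) ⊆ S := by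
    intro x hx
    rcases Finset.mem_insert.mp hx with rfl | hx
    · exact ha
    · rcases Finset.mem_singleton.mp hx with rfl
      exact hb
  calc (2 : ℤ) ≤ ∑ p ∈ ({a, b} : Finset (ℤ × ℤ)), g p := by
        rw [Finset.sum_pair hab]; linarith
    _ ≤ ∑ p ∈ S, g p :=
        Finset.sum_le_sum_of_subset_of_nonneg hsub (fun x hx _ => hg x hx)

private lemma mem_helper (t m n : ℕ) (x y A B : ℤ)
    (hA : x + y = 2 * ((t : ℤ) - 1) * A) (hB : x - y = 2 * ((t : ℤ) - 1) * B)
    (hx1 : 2 - (t : ℤ) ≤ x) (hx2 : x ≤ (m : ℤ) + t - 3)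
    (hy1 : 2 - (t : ℤ) ≤ y) (hy2 : y ≤ (n : ℤ) + t - 3) :
    (x, y) ∈ (Finset.Icc ((2 : ℤ) - t, (2 : ℤ) - t) ((m : ℤ) + t - 3, (n : ℤ) + t - 3)).filter
      (· ∈ rectTowers t) := by
  refine Finset.mem_filter.mpr ⟨?_, ⟨⟨A, hA⟩, ⟨B, hB⟩⟩⟩
  exact Finset.mem_Icc.mpr ⟨⟨hx1, hy1⟩, ⟨hx2, hy2⟩⟩

theorem rect_towers_in_enlarged_rect_supply_two (t m n : ℕ) (ht : 2 < t) (hm : 2 ≤ m) (hn : 2 ≤ n)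
    (i j : ℤ) (hi0 : 0 ≤ i) (hi : i ≤ (m : ℤ) - 1) (hj0 : 0 ≤ j) (hj : j ≤ (n : ℤ) - 1) :
    2 ≤ ∑ p ∈ (Finset.Icc ((2 : ℤ) - t, (2 : ℤ) - t) ((m : ℤ) + t - 3, (n : ℤ) + t - 3)).filter
          (· ∈ rectTowers t),
        max ((t : ℤ) - (|i - p.1| + |j - p.2|)) 0 := by
  have htz : (3 : ℤ) ≤ (t : ℤ) := by exact_mod_cast ht
  have hmz : (2 : ℤ) ≤ (m : ℤ) := by exact_mod_cast hm
  have hnz : (2 : ℤ) ≤ (n : ℤ) := by exact_mod_cast hn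
  set q : ℤ := (t : ℤ) - 1 with hqdef
  have hq : 2 ≤ q := by omega
  have h2q : (0 : ℤ) < 2 * q := by omega
  have hu : 2 * q * ((i + j) / (2 * q)) + (i + j) % (2 * q) = i + j := Int.mul_ediv_add_emod _ _
  have hv : 2 * q * ((i - j) / (2 * q)) + (i - j) % (2 * q) = i - j := Int.mul_ediv_add_emod _ _
  set ku := (i + j) / (2 * q) with hkudef
  set kv := (i - j) / (2 * q) with hkvdef
  set e := (i + j) % (2 * q) with hedef
  set f := (i - j) % (2 * q) with hfdef
  have he0 : 0 ≤ e := Int.emod_nonneg _ (by omega)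
  have he1 : e < 2 * q := Int.emod_lt_of_pos _ h2q
  have hf0 : 0 ≤ f := Int.emod_nonneg _ (by omega)
  have hf1 : f < 2 * q := Int.emod_lt_of_pos _ h2q
  have hpar : e + f = 2 * (i - q * ku - q * kv) := by linear_combination hu + hv
  have hnonneg : ∀ p ∈ (Finset.Icc ((2 : ℤ) - t, (2 : ℤ) - t)
        ((m : ℤ) + t - 3, (n : ℤ) + t - 3)).filter (· ∈ rectTowers t),
      0 ≤ max ((t : ℤ) - (|i - p.1| + |j - p.2|)) 0 := fun p _ => le_max_right _ _
  have hsig : ∀ (x y w : ℤ), |i - x| + |j - y| + w ≤ q + 1 →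
      w ≤ max ((t : ℤ) - (|i - x| + |j - y|)) 0 := by
    intro x y w h
    refine le_trans ?_ (le_max_left _ _)
    linarith
  have hE : e ≠ q → ∃ e' A, (i + j) - e' = 2 * q * A ∧ 1 - q ≤ e' ∧ e' ≤ q - 1 ∧
      (e' = e ∨ e' = e - 2 * q) := by
    intro hne
    rcases lt_or_gt_of_ne hne with h | h
    · exact ⟨e, ku, by linear_combination -hu, by omega, by omega, Or.inl rfl⟩
    · exact ⟨e - 2 * q, ku + 1, by linear_combination -hu, by omega, by omega, Or.inr rfl⟩
  have hF : f ≠ q → ∃ f' B, (i - j) - f' = 2 * q * B ∧ 1 - q ≤ f' ∧ f' ≤ q - 1 ∧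
      (f' = f ∨ f' = f - 2 * q) := by
    intro hne
    rcases lt_or_gt_of_ne hne with h | h
    · exact ⟨f, kv, by linear_combination -hv, by omega, by omega, Or.inl rfl⟩
    · exact ⟨f - 2 * q, kv + 1, by linear_combination -hv, by omega, by omega, Or.inr rfl⟩
  by_cases hEq : e = q
  · by_cases hFq : f = q
    · -- Case D: four towers at distance q; pick one horizontal and one vertical
      rw [hEq] at hu hpar
      rw [hFq] at hv hpar
      obtain ⟨x1, A1, B1, h1A, h1B, h1l, h1r, h1d⟩ :
          ∃ x1 A1 B1, x1 + j = 2 * q * A1 ∧ x1 - j = 2 * q * B1 ∧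
            2 - (t : ℤ) ≤ x1 ∧ x1 ≤ (m : ℤ) + t - 3 ∧ |i - x1| = q := by
        rcases le_or_gt 1 i with h | h
        · exact ⟨i - q, ku, kv, by linear_combination -hu, by linear_combination -hv,
            by omega, by omega, by rw [show i - (i - q) = q by ring]; exact abs_of_nonneg (by omega)⟩
        · exact ⟨i + q, ku + 1, kv + 1, by linear_combination -hu, by linear_combination -hv,
            by omega, by omega,
            (by rw [show i - (i + q) = -q by ring, abs_neg]; exact abs_of_nonneg (by omega))⟩
      obtain ⟨y2, A2, B2, h2A, h2B, h2l, h2r, h2d⟩ :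
          ∃ y2 A2 B2, i + y2 = 2 * q * A2 ∧ i - y2 = 2 * q * B2 ∧
            2 - (t : ℤ) ≤ y2 ∧ y2 ≤ (n : ℤ) + t - 3 ∧ |j - y2| = q := by
        rcases le_or_gt 1 j with h | h
        · exact ⟨j - q, ku, kv + 1, by linear_combination -hu, by linear_combination -hv,
            by omega, by omega, by rw [show j - (j - q) = q by ring]; exact abs_of_nonneg (by omega)⟩
        · exact ⟨j + q, ku + 1, kv, by linear_combination -hu, by linear_combination -hv,
            by omega, by omega,
            (by rw [show j - (j + q) = -q by ring, abs_neg]; exact abs_of_nonneg (by omega))⟩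
      have hne : ((x1, j) : ℤ × ℤ) ≠ (i, y2) := by
        intro h
        rw [Prod.mk.injEq] at h
        rw [h.1, sub_self, abs_eq_zero.2 rfl] at h1d
        omega
      refine two_le_sum_pair hnonneg hne
        (mem_helper t m n x1 j A1 B1 (by rw [← hqdef]; exact h1A) (by rw [← hqdef]; exact h1B)
          h1l h1r (by omega) (by omega))
        (mem_helper t m n i y2 A2 B2 (by rw [← hqdef]; exact h2A) (by rw [← hqdef]; exact h2B)
          (by omega) (by omega) h2l h2r)
        (hsig x1 j 1 (by rw [sub_self, abs_eq_zero.2 rfl, h1d]; omega))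
        (hsig i y2 1 (by rw [sub_self, abs_eq_zero.2 rfl, h2d]; omega))
    · -- Case B: e = q, f ≠ q: two towers (i-c, j-(q-c)) and (i+(q-c), j+c)
      rw [hEq] at hu hpar
      obtain ⟨f', B, hfB, hfl, hfr, hfor⟩ := hF hFq
      obtain ⟨c, hc⟩ : ∃ c, q + f' = 2 * c := by
        rcases hfor with rfl | rfl
        · exact ⟨i - q * ku - q * kv, by linear_combination hpar⟩
        · exact ⟨i - q * ku - q * kv - q, by linear_combination hpar⟩
      have hc1 : 1 ≤ c := by omega
      have hc2 : c ≤ q - 1 := by omega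
      have hne : ((i - c, j - (q - c)) : ℤ × ℤ) ≠ (i + (q - c), j + c) := by
        intro h
        rw [Prod.mk.injEq] at h
        omega
      refine two_le_sum_pair hnonneg hne
        (mem_helper t m n (i - c) (j - (q - c)) ku B
          (by rw [← hqdef]; linear_combination -hu)
          (by rw [← hqdef]; linear_combination hfB + hc)
          (by omega) (by omega) (by omega) (by omega))
        (mem_helper t m n (i + (q - c)) (j + c) (ku + 1) B
          (by rw [← hqdef]; linear_combination -hu)
          (by rw [← hqdef]; linear_combination hfB + hc)
          (by omega) (by omega) (by omega) (by omega))
        (hsig (i - c) (j - (q - c)) 1 (by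
          rw [show i - (i - c) = c by ring, show j - (j - (q - c)) = q - c by ring,
            abs_of_nonneg (by omega : (0:ℤ) ≤ c), abs_of_nonneg (by omega : (0:ℤ) ≤ q - c)]
          omega))
        (hsig (i + (q - c)) (j + c) 1 (by
          rw [show i - (i + (q - c)) = -(q - c) by ring, show j - (j + c) = -c by ring,
            abs_neg, abs_neg, abs_of_nonneg (by omega : (0:ℤ) ≤ c),
            abs_of_nonneg (by omega : (0:ℤ) ≤ q - c)]
          omega))
  · by_cases hFq : f = q
    · -- Case C: e ≠ q, f = q: two towers (i-c, j+(q-c)) and (i+(q-c), j-c)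
      rw [hFq] at hv hpar
      obtain ⟨e', A, heA, hel, her, heor⟩ := hE hEq
      obtain ⟨c, hc⟩ : ∃ c, q + e' = 2 * c := by
        rcases heor with rfl | rfl
        · exact ⟨i - q * ku - q * kv, by linear_combination hpar⟩
        · exact ⟨i - q * ku - q * kv - q, by linear_combination hpar⟩
      have hc1 : 1 ≤ c := by omega
      have hc2 : c ≤ q - 1 := by omega
      have hne : ((i - c, j + (q - c)) : ℤ × ℤ) ≠ (i + (q - c), j - c) := by
        intro h
        rw [Prod.mk.injEq] at h
        omega
      refine two_le_sum_pair hnonneg hne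
        (mem_helper t m n (i - c) (j + (q - c)) A kv
          (by rw [← hqdef]; linear_combination heA + hc)
          (by rw [← hqdef]; linear_combination -hv)
          (by omega) (by omega) (by omega) (by omega))
        (mem_helper t m n (i + (q - c)) (j - c) A (kv + 1)
          (by rw [← hqdef]; linear_combination heA + hc)
          (by rw [← hqdef]; linear_combination -hv)
          (by omega) (by omega) (by omega) (by omega))
        (hsig (i - c) (j + (q - c)) 1 (by
          rw [show i - (i - c) = c by ring, show j - (j + (q - c)) = -(q - c) by ring,
            abs_neg, abs_of_nonneg (by omega : (0:ℤ) ≤ c),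
            abs_of_nonneg (by omega : (0:ℤ) ≤ q - c)]
          omega))
        (hsig (i + (q - c)) (j - c) 1 (by
          rw [show i - (i + (q - c)) = -(q - c) by ring, show j - (j - c) = c by ring,
            abs_neg, abs_of_nonneg (by omega : (0:ℤ) ≤ c),
            abs_of_nonneg (by omega : (0:ℤ) ≤ q - c)]
          omega))
    · -- Case A: nearest tower gives signal ≥ 2
      obtain ⟨e', A, heA, hel, her, heor⟩ := hE hEq
      obtain ⟨f', B, hfB, hfl, hfr, hfor⟩ := hF hFq
      obtain ⟨c, hc⟩ : ∃ c, e' + f' = 2 * c := by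
        rcases heor with rfl | rfl <;> rcases hfor with rfl | rfl
        · exact ⟨i - q * ku - q * kv, by linear_combination hpar⟩
        · exact ⟨i - q * ku - q * kv - q, by linear_combination hpar⟩
        · exact ⟨i - q * ku - q * kv - q, by linear_combination hpar⟩
        · exact ⟨i - q * ku - q * kv - 2 * q, by linear_combination hpar⟩
      obtain ⟨d, hd⟩ : ∃ d, e' - f' = 2 * d := ⟨c - f', by omega⟩
      have hcd : c + d = e' := by omega
      have hcd2 : c - d = f' := by omega
      refine two_le_sum_single hnonneg
        (mem_helper t m n (i - c) (j - d) A B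
          (by rw [← hqdef]; linear_combination heA - hcd)
          (by rw [← hqdef]; linear_combination hfB - hcd2)
          (by omega) (by omega) (by omega) (by omega))
        (hsig (i - c) (j - d) 2 (by
          rw [show i - (i - c) = c by ring, show j - (j - d) = d by ring]
          rcases abs_cases c with ⟨h1, _⟩ | ⟨h1, _⟩ <;>
            rcases abs_cases d with ⟨h2, _⟩ | ⟨h2, _⟩ <;> omega))
end

section
/- For every integer t > 2, the rectilinear tower set T_t is a (t,2) broadcast on the infinite grid: for every (i,j) ∈ ℤ², Σ_{(x,y) ∈ T_t} max(t − (|i−x| + |j−y|), 0) ≥ 2 (the sum has only finitely many nonzero terms). -/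
/-- Auxiliary: a tower point parametrized by lattice coordinates. -/
def towerPt (s qu qv a b : ℤ) : ℤ × ℤ :=
  (s * ((qu + a) + (qv + b)), s * ((qu + a) - (qv + b)))

lemma towerPt_mem (t : ℕ) (qu qv a b : ℤ) :
    towerPt ((t : ℤ) - 1) qu qv a b ∈ rectTowers t := by
  constructor
  · exact ⟨qu + a, by simp only [towerPt]; ring⟩
  · exact ⟨qv + b, by simp only [towerPt]; ring⟩

lemma point_bound (t A B x y : ℤ) (h1 : 2 * A = x + y) (h2 : 2 * B = x - y) :
    t - max |x| |y| ≤ max (t - (|A| + |B|)) 0 := by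
  simp only [Int.abs_eq_natAbs]
  omega

theorem rect_towers_broadcast (t : ℕ) (ht : 2 < t) (i j : ℤ) :
    {p ∈ rectTowers t | max ((t : ℤ) - (|i - p.1| + |j - p.2|)) 0 ≠ 0}.Finite ∧
    2 ≤ ∑ᶠ p ∈ rectTowers t, max ((t : ℤ) - (|i - p.1| + |j - p.2|)) 0 := by
  have ht3 : (3 : ℤ) ≤ (t : ℤ) := by exact_mod_cast ht
  have hdpos : (0 : ℤ) < 2 * ((t : ℤ) - 1) := by linarith
  -- Finiteness of the support set
  have hfin : {p ∈ rectTowers t | max ((t : ℤ) - (|i - p.1| + |j - p.2|)) 0 ≠ 0}.Finite := by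
    apply Set.Finite.subset (Set.finite_Icc (i - t, j - t) (i + t, j + t))
    rintro ⟨x, y⟩ ⟨-, hne⟩
    have hpos : 0 < (t : ℤ) - (|i - x| + |j - y|) := by
      rcases le_or_gt ((t : ℤ) - (|i - x| + |j - y|)) 0 with h | h
      · exact absurd (max_eq_right h) hne
      · exact h
    have h1 := abs_nonneg (i - x); have h2 := abs_nonneg (j - y)
    have h3 : |i - x| ≤ t := by linarith
    have h4 : |j - y| ≤ t := by linarith
    rw [abs_le] at h3 h4
    simp only [Set.mem_Icc, Prod.mk_le_mk]
    exact ⟨⟨by linarith [h3.2], by linarith [h4.2]⟩, ⟨by linarith [h3.1], by linarith [h4.1]⟩⟩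
  refine ⟨hfin, ?_⟩
  have hfin' : (rectTowers t ∩
      Function.support fun p : ℤ × ℤ => max ((t : ℤ) - (|i - p.1| + |j - p.2|)) 0).Finite := by
    apply hfin.subset
    intro p hp
    exact ⟨hp.1, Function.mem_support.mp hp.2⟩
  -- division with remainder in the rotated coordinates
  obtain ⟨qu, ru, hu, hru0, hru1⟩ :
      ∃ q r : ℤ, i + j = 2 * ((t : ℤ) - 1) * q + r ∧ 0 ≤ r ∧ r < 2 * ((t : ℤ) - 1) :=
    ⟨(i + j) / (2 * ((t : ℤ) - 1)), (i + j) % (2 * ((t : ℤ) - 1)), (Int.mul_ediv_add_emod _ _).symm,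
      Int.emod_nonneg _ hdpos.ne', Int.emod_lt_of_pos _ hdpos⟩
  obtain ⟨qv, rv, hv, hrv0, hrv1⟩ :
      ∃ q r : ℤ, i - j = 2 * ((t : ℤ) - 1) * q + r ∧ 0 ≤ r ∧ r < 2 * ((t : ℤ) - 1) :=
    ⟨(i - j) / (2 * ((t : ℤ) - 1)), (i - j) % (2 * ((t : ℤ) - 1)), (Int.mul_ediv_add_emod _ _).symm,
      Int.emod_nonneg _ hdpos.ne', Int.emod_lt_of_pos _ hdpos⟩
  have hsne : ((t : ℤ) - 1) ≠ 0 := by linarith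
  have hPinj : ∀ a b a' b' : ℤ,
      towerPt ((t : ℤ) - 1) qu qv a b = towerPt ((t : ℤ) - 1) qu qv a' b' → a = a' ∧ b = b' := by
    intro a b a' b' h
    rw [Prod.ext_iff] at h
    simp only [towerPt] at h
    have e1 := mul_left_cancel₀ hsne h.1
    have e2 := mul_left_cancel₀ hsne h.2
    omega
  have hne : ∀ a b a' b' : ℤ, ¬(a = a' ∧ b = b') →
      towerPt ((t : ℤ) - 1) qu qv a b ≠ towerPt ((t : ℤ) - 1) qu qv a' b' :=
    fun a b a' b' h hh => h (hPinj a b a' b' hh)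
  set P00 := towerPt ((t : ℤ) - 1) qu qv 0 0 with hP00
  set P01 := towerPt ((t : ℤ) - 1) qu qv 0 1 with hP01
  set P10 := towerPt ((t : ℤ) - 1) qu qv 1 0 with hP10
  set P11 := towerPt ((t : ℤ) - 1) qu qv 1 1 with hP11
  set F : Finset (ℤ × ℤ) := insert P00 (insert P01 (insert P10 {P11})) with hF
  -- per-point signal bounds
  have g00 : (t : ℤ) - max |ru - 2 * ((t : ℤ) - 1) * 0| |rv - 2 * ((t : ℤ) - 1) * 0| ≤
      max ((t : ℤ) - (|i - P00.1| + |j - P00.2|)) 0 :=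
    point_bound _ _ _ _ _ (by simp only [hP00, towerPt]; linear_combination hu + hv)
      (by simp only [hP00, towerPt]; linear_combination hu - hv)
  have g01 : (t : ℤ) - max |ru - 2 * ((t : ℤ) - 1) * 0| |rv - 2 * ((t : ℤ) - 1) * 1| ≤
      max ((t : ℤ) - (|i - P01.1| + |j - P01.2|)) 0 :=
    point_bound _ _ _ _ _ (by simp only [hP01, towerPt]; linear_combination hu + hv)
      (by simp only [hP01, towerPt]; linear_combination hu - hv)
  have g10 : (t : ℤ) - max |ru - 2 * ((t : ℤ) - 1) * 1| |rv - 2 * ((t : ℤ) - 1) * 0| ≤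
      max ((t : ℤ) - (|i - P10.1| + |j - P10.2|)) 0 :=
    point_bound _ _ _ _ _ (by simp only [hP10, towerPt]; linear_combination hu + hv)
      (by simp only [hP10, towerPt]; linear_combination hu - hv)
  have g11 : (t : ℤ) - max |ru - 2 * ((t : ℤ) - 1) * 1| |rv - 2 * ((t : ℤ) - 1) * 1| ≤
      max ((t : ℤ) - (|i - P11.1| + |j - P11.2|)) 0 :=
    point_bound _ _ _ _ _ (by simp only [hP11, towerPt]; linear_combination hu + hv)
      (by simp only [hP11, towerPt]; linear_combination hu - hv)
  have hsumF : 2 ≤ ∑ p ∈ F, max ((t : ℤ) - (|i - p.1| + |j - p.2|)) 0 := by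
    rw [hF, Finset.sum_insert (by
        simp only [Finset.mem_insert, Finset.mem_singleton]
        push_neg
        exact ⟨hne 0 0 0 1 (by norm_num), hne 0 0 1 0 (by norm_num), hne 0 0 1 1 (by norm_num)⟩),
      Finset.sum_insert (by
        simp only [Finset.mem_insert, Finset.mem_singleton]
        push_neg
        exact ⟨hne 0 1 1 0 (by norm_num), hne 0 1 1 1 (by norm_num)⟩),
      Finset.sum_insert (by
        simp only [Finset.mem_singleton]
        exact hne 1 0 1 1 (by norm_num)),
      Finset.sum_singleton]
    have n00 : (0:ℤ) ≤ max ((t : ℤ) - (|i - P00.1| + |j - P00.2|)) 0 := le_max_right _ _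
    have n01 : (0:ℤ) ≤ max ((t : ℤ) - (|i - P01.1| + |j - P01.2|)) 0 := le_max_right _ _
    have n10 : (0:ℤ) ≤ max ((t : ℤ) - (|i - P10.1| + |j - P10.2|)) 0 := le_max_right _ _
    have n11 : (0:ℤ) ≤ max ((t : ℤ) - (|i - P11.1| + |j - P11.2|)) 0 := le_max_right _ _
    generalize max ((t : ℤ) - (|i - P00.1| + |j - P00.2|)) 0 = f00 at g00 n00 ⊢
    generalize max ((t : ℤ) - (|i - P01.1| + |j - P01.2|)) 0 = f01 at g01 n01 ⊢
    generalize max ((t : ℤ) - (|i - P10.1| + |j - P10.2|)) 0 = f10 at g10 n10 ⊢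
    generalize max ((t : ℤ) - (|i - P11.1| + |j - P11.2|)) 0 = f11 at g11 n11 ⊢
    simp only [Int.abs_eq_natAbs] at g00 g01 g10 g11
    omega
  have hFmem : ∀ p ∈ F, p ∈ rectTowers t := by
    intro p hp
    simp only [hF, Finset.mem_insert, Finset.mem_singleton] at hp
    rcases hp with h | h | h | h <;> rw [h] <;>
      first
        | exact towerPt_mem t qu qv 0 0
        | exact towerPt_mem t qu qv 0 1
        | exact towerPt_mem t qu qv 1 0
        | exact towerPt_mem t qu qv 1 1
  rw [finsum_mem_eq_sum _ hfin']
  calc (2:ℤ) ≤ ∑ p ∈ F, max ((t : ℤ) - (|i - p.1| + |j - p.2|)) 0 := hsumF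
    _ = ∑ p ∈ F.filter (fun p => max ((t : ℤ) - (|i - p.1| + |j - p.2|)) 0 ≠ 0),
        max ((t : ℤ) - (|i - p.1| + |j - p.2|)) 0 := (Finset.sum_filter_ne_zero F).symm
    _ ≤ ∑ p ∈ hfin'.toFinset, max ((t : ℤ) - (|i - p.1| + |j - p.2|)) 0 := by
        apply Finset.sum_le_sum_of_subset_of_nonneg
        · intro p hp
          rw [Finset.mem_filter] at hp
          rw [Set.Finite.mem_toFinset]
          exact ⟨hFmem p hp.1, Function.mem_support.mpr hp.2⟩
        · exact fun p _ _ => le_max_right _ _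
end

section
/- For every integer t > 2 and every vertex v ∈ ℤ², either there exists a tower T ∈ T_t with taxicab distance dist(T,v) ≤ t−2, or there exist two distinct towers T₁, T₂ ∈ T_t with dist(T₁,v) = dist(T₂,v) = t−1. -/
private lemma abs_key (x y s : ℤ)
    (h : x + y = s ∨ x + y = -s ∨ x - y = s ∨ x - y = -s)
    (h2 : -s ≤ x + y) (h3 : x + y ≤ s) (h4 : -s ≤ x - y) (h5 : x - y ≤ s) :
    |x| + |y| = s := by
  rcases abs_cases x with ⟨h6, h7⟩ | ⟨h6, h7⟩ <;>
    rcases abs_cases y with ⟨h8, h9⟩ | ⟨h8, h9⟩ <;> omega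

private lemma abs_key_le (x y s : ℤ)
    (h2 : -s ≤ x + y) (h3 : x + y ≤ s) (h4 : -s ≤ x - y) (h5 : x - y ≤ s) :
    |x| + |y| ≤ s := by
  rcases abs_cases x with ⟨h6, h7⟩ | ⟨h6, h7⟩ <;>
    rcases abs_cases y with ⟨h8, h9⟩ | ⟨h8, h9⟩ <;> omega

theorem rect_towers_near_or_two_on_outline (t : ℕ) (ht : 2 < t) (v : ℤ × ℤ) :
    (∃ T ∈ rectTowers t, |T.1 - v.1| + |T.2 - v.2| ≤ (t : ℤ) - 2) ∨
    (∃ T₁ ∈ rectTowers t, ∃ T₂ ∈ rectTowers t, T₁ ≠ T₂ ∧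
      |T₁.1 - v.1| + |T₁.2 - v.2| = (t : ℤ) - 1 ∧
      |T₂.1 - v.1| + |T₂.2 - v.2| = (t : ℤ) - 1) := by
  have hn2 : (2 : ℤ) ≤ (t : ℤ) - 1 := by omega
  set n : ℤ := (t : ℤ) - 1 with hn
  have hm : (0 : ℤ) < 2 * n := by omega
  set a := (v.1 + v.2 + n) % (2 * n) with haa
  set b := (v.1 - v.2 + n) % (2 * n) with hbb
  have ha0 : 0 ≤ a := Int.emod_nonneg _ (by omega)
  have ha1 : a < 2 * n := Int.emod_lt_of_pos _ hm
  have hb0 : 0 ≤ b := Int.emod_nonneg _ (by omega)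
  have hb1 : b < 2 * n := Int.emod_lt_of_pos _ hm
  obtain ⟨q1, hq1⟩ : 2 * n ∣ (v.1 + v.2 + n - a) :=
    ⟨(v.1 + v.2 + n) / (2 * n), by
      have := Int.mul_ediv_add_emod (v.1 + v.2 + n) (2 * n); linarith⟩
  obtain ⟨q2, hq2⟩ : 2 * n ∣ (v.1 - v.2 + n - b) :=
    ⟨(v.1 - v.2 + n) / (2 * n), by
      have := Int.mul_ediv_add_emod (v.1 - v.2 + n) (2 * n); linarith⟩
  obtain ⟨c, hc⟩ : ∃ c, a + b = 2 * c :=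
    ⟨v.1 + n - n * q1 - n * q2, by linear_combination (-1 : ℤ) * hq1 - hq2⟩
  rcases eq_or_ne a 0 with hA | hA
  · -- a = 0 : two towers at distance n
    right
    refine ⟨(v.1 + n - c, v.2 + c), ⟨⟨q1, ?_⟩, ⟨q2, ?_⟩⟩,
      (v.1 - c, v.2 - n + c), ⟨⟨q1 - 1, ?_⟩, ⟨q2, ?_⟩⟩, ?_, ?_, ?_⟩
    · linear_combination hq1 + hA
    · linear_combination hq2 + hc - hA
    · linear_combination hq1 + hA
    · linear_combination hq2 + hc - hA
    · intro h
      have h1 := congrArg Prod.fst h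
      simp only at h1
      omega
    · have e1 : v.1 + n - c - v.1 = n - c := by ring
      have e2 : v.2 + c - v.2 = c := by ring
      rw [e1, e2]
      exact abs_key _ _ _ (Or.inl (by ring)) (by omega) (by omega) (by omega) (by omega)
    · have e1 : v.1 - c - v.1 = -c := by ring
      have e2 : v.2 - n + c - v.2 = c - n := by ring
      rw [e1, e2]
      exact abs_key _ _ _ (Or.inr (Or.inl (by ring))) (by omega) (by omega) (by omega) (by omega)
  · rcases eq_or_ne b 0 with hB | hB
    · -- b = 0 : two towers at distance n
      right
      refine ⟨(v.1 + n - c, v.2 - c), ⟨⟨q1, ?_⟩, ⟨q2, ?_⟩⟩,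
        (v.1 - c, v.2 + n - c), ⟨⟨q1, ?_⟩, ⟨q2 - 1, ?_⟩⟩, ?_, ?_, ?_⟩
      · linear_combination hq1 + hc - hB
      · linear_combination hq2 + hB
      · linear_combination hq1 + hc - hB
      · linear_combination hq2 + hB
      · intro h
        have h1 := congrArg Prod.fst h
        simp only at h1
        omega
      · have e1 : v.1 + n - c - v.1 = n - c := by ring
        have e2 : v.2 - c - v.2 = -c := by ring
        rw [e1, e2]
        exact abs_key _ _ _ (Or.inr (Or.inr (Or.inl (by ring)))) (by omega) (by omega) (by omega)
          (by omega)
      · have e1 : v.1 - c - v.1 = -c := by ring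
        have e2 : v.2 + n - c - v.2 = n - c := by ring
        rw [e1, e2]
        exact abs_key _ _ _ (Or.inr (Or.inr (Or.inr (by ring)))) (by omega) (by omega) (by omega)
          (by omega)
    · -- a ≠ 0, b ≠ 0 : one tower within n - 1
      left
      refine ⟨(v.1 + n - c, v.2 + c - a), ⟨⟨q1, ?_⟩, ⟨q2, ?_⟩⟩, ?_⟩
      · linear_combination hq1
      · linear_combination hq2 + hc
      · have e1 : v.1 + n - c - v.1 = n - c := by ring
        have e2 : v.2 + c - a - v.2 = c - a := by ring
        rw [e1, e2, show (t : ℤ) - 2 = n - 1 from by omega]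
        exact abs_key_le _ _ _ (by omega) (by omega) (by omega) (by omega)
end

section
/- Let t > 2 and m, n ≥ 2 be integers. If u and v are two distinct towers of T_t, each lying in the enlarged rectangle {(x,y) ∈ ℤ² : −(t−2) ≤ x ≤ m+t−3, −(t−2) ≤ y ≤ n+t−3} but outside the rectangle R = {0,…,m−1} × {0,…,n−1}, then clamp_{m,n}(u) ≠ clamp_{m,n}(v). -/
/-- The clamping map onto the rectangle `{0,…,m−1} × {0,…,n−1}`. -/
def clamp (m n : ℕ) (p : ℤ × ℤ) : ℤ × ℤ :=
  (min (max p.1 0) ((m : ℤ) - 1), min (max p.2 0) ((n : ℤ) - 1))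

lemma clamp_coord_aux (t m : ℕ) (ht : 2 < t) (hm : 2 ≤ m) (a b : ℤ)
    (ha1 : 2 - (t : ℤ) ≤ a) (ha2 : a ≤ (m : ℤ) + t - 3)
    (hb1 : 2 - (t : ℤ) ≤ b) (hb2 : b ≤ (m : ℤ) + t - 3)
    (hd : ((t : ℤ) - 1) ∣ (a - b))
    (hc : min (max a 0) ((m : ℤ) - 1) = min (max b 0) ((m : ℤ) - 1)) : a = b := by
  by_contra h
  have habs : (t : ℤ) - 1 ≤ |a - b| :=
    Int.le_of_dvd (abs_pos.mpr (sub_ne_zero.mpr h)) ((dvd_abs _ _).mpr hd)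
  have h2 := le_abs.mp habs
  omega

theorem clamp_injective_on_outside_towers (t m n : ℕ) (ht : 2 < t) (hm : 2 ≤ m) (hn : 2 ≤ n)
    (u v : ℤ × ℤ) (hu : u ∈ rectTowers t) (hv : v ∈ rectTowers t) (huv : u ≠ v)
    (hux1 : 2 - (t : ℤ) ≤ u.1) (hux2 : u.1 ≤ (m : ℤ) + t - 3)
    (huy1 : 2 - (t : ℤ) ≤ u.2) (huy2 : u.2 ≤ (n : ℤ) + t - 3)
    (hvx1 : 2 - (t : ℤ) ≤ v.1) (hvx2 : v.1 ≤ (m : ℤ) + t - 3)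
    (hvy1 : 2 - (t : ℤ) ≤ v.2) (hvy2 : v.2 ≤ (n : ℤ) + t - 3)
    (huR : ¬(0 ≤ u.1 ∧ u.1 ≤ (m : ℤ) - 1 ∧ 0 ≤ u.2 ∧ u.2 ≤ (n : ℤ) - 1))
    (hvR : ¬(0 ≤ v.1 ∧ v.1 ≤ (m : ℤ) - 1 ∧ 0 ≤ v.2 ∧ v.2 ≤ (n : ℤ) - 1)) :
    clamp m n u ≠ clamp m n v := by
  intro hc
  have d1 : (2 * ((t : ℤ) - 1)) ∣ ((u.1 + u.2) - (v.1 + v.2)) := dvd_sub hu.1 hv.1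
  have d2 : (2 * ((t : ℤ) - 1)) ∣ ((u.1 - u.2) - (v.1 - v.2)) := dvd_sub hu.2 hv.2
  have dx : ((t : ℤ) - 1) ∣ (u.1 - v.1) := by
    have h3 : (2 * ((t : ℤ) - 1)) ∣ (2 * (u.1 - v.1)) := by
      have := dvd_add d1 d2
      have he : ((u.1 + u.2) - (v.1 + v.2)) + ((u.1 - u.2) - (v.1 - v.2)) = 2 * (u.1 - v.1) := by
        ring
      rwa [he] at this
    exact (mul_dvd_mul_iff_left (two_ne_zero)).mp h3
  have dy : ((t : ℤ) - 1) ∣ (u.2 - v.2) := by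
    have h3 : (2 * ((t : ℤ) - 1)) ∣ (2 * (u.2 - v.2)) := by
      have := dvd_sub d1 d2
      have he : ((u.1 + u.2) - (v.1 + v.2)) - ((u.1 - u.2) - (v.1 - v.2)) = 2 * (u.2 - v.2) := by
        ring
      rwa [he] at this
    exact (mul_dvd_mul_iff_left (two_ne_zero)).mp h3
  have hc1 : min (max u.1 0) ((m : ℤ) - 1) = min (max v.1 0) ((m : ℤ) - 1) :=
    congrArg Prod.fst hc
  have hc2 : min (max u.2 0) ((n : ℤ) - 1) = min (max v.2 0) ((n : ℤ) - 1) :=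
    congrArg Prod.snd hc
  have e1 := clamp_coord_aux t m ht hm u.1 v.1 hux1 hux2 hvx1 hvx2 dx hc1
  have e2 := clamp_coord_aux t n ht hn u.2 v.2 huy1 huy2 hvy1 hvy2 dy hc2
  exact huv (Prod.ext e1 e2)
end

section
/- For all positive integers m and n, the (3,2) broadcast domination number of the m × n grid graph satisfies γ_{3,2}(G_{m,n}) ≤ ⌊(m+2)(n+2)/8⌋. -/
lemma grid_adj_horiz {m n : ℕ} (a a' : Fin m) (b : Fin n)
    (h : (a:ℕ)+1 = (a':ℕ) ∨ (a':ℕ)+1 = (a:ℕ)) : (gridGraph m n).Adj (a,b) (a',b) := by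
  rw [gridGraph, SimpleGraph.fromRel_adj]
  constructor
  · intro hEq
    have : (a:ℕ) = (a':ℕ) := congrArg (fun p : Fin m × Fin n => ((p.1 : Fin m) : ℕ)) hEq
    omega
  · rcases h with h | h
    · exact Or.inl (Or.inr ⟨rfl, h⟩)
    · exact Or.inr (Or.inr ⟨rfl, h⟩)

lemma grid_adj_vert {m n : ℕ} (a : Fin m) (b b' : Fin n)
    (h : (b:ℕ)+1 = (b':ℕ) ∨ (b':ℕ)+1 = (b:ℕ)) : (gridGraph m n).Adj (a,b) (a,b') := by
  rw [gridGraph, SimpleGraph.fromRel_adj]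
  constructor
  · intro hEq
    have : (b:ℕ) = (b':ℕ) := congrArg (fun p : Fin m × Fin n => ((p.2 : Fin n) : ℕ)) hEq
    omega
  · rcases h with h | h
    · exact Or.inl (Or.inl ⟨rfl, h⟩)
    · exact Or.inr (Or.inl ⟨rfl, h⟩)

lemma grid_walk {m n : ℕ} : ∀ (k : ℕ) (u v : Fin m × Fin n),
    ((u.1:ℕ) - v.1) + ((v.1:ℕ) - u.1) + (((u.2:ℕ) - v.2) + ((v.2:ℕ) - u.2)) ≤ k →
    ∃ p : (gridGraph m n).Walk u v, p.length ≤ k := by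
  intro k
  induction k with
  | zero =>
    intro u v h
    have : u = v := by
      have h1 : (u.1:ℕ) = v.1 := by omega
      have h2 : (u.2:ℕ) = v.2 := by omega
      exact Prod.ext (Fin.ext h1) (Fin.ext h2)
    subst this
    exact ⟨SimpleGraph.Walk.nil, by simp⟩
  | succ k ih =>
    intro u v h
    by_cases huv : u = v
    · subst huv; exact ⟨SimpleGraph.Walk.nil, by simp⟩
    · obtain ⟨a, b⟩ := u
      obtain ⟨c, d⟩ := v
      simp at h
      rcases Nat.lt_trichotomy (a:ℕ) (c:ℕ) with hlt | heq | hgt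
      · have hlt' : (a:ℕ)+1 < m := by omega
        obtain ⟨p, hp⟩ := ih (⟨(a:ℕ)+1, hlt'⟩, b) (c, d) (by simp; omega)
        exact ⟨SimpleGraph.Walk.cons (grid_adj_horiz a _ b (by simp)) p, by simp; omega⟩
      · rcases Nat.lt_trichotomy (b:ℕ) (d:ℕ) with h2 | h2 | h2
        · have h2' : (b:ℕ)+1 < n := by omega
          obtain ⟨p, hp⟩ := ih (a, ⟨(b:ℕ)+1, h2'⟩) (c, d) (by simp; omega)
          exact ⟨SimpleGraph.Walk.cons (grid_adj_vert a b _ (by simp)) p, by simp; omega⟩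
        · exact absurd (Prod.ext (Fin.ext heq) (Fin.ext h2)) huv
        · have h2' : (b:ℕ)-1 < n := by omega
          obtain ⟨p, hp⟩ := ih (a, ⟨(b:ℕ)-1, h2'⟩) (c, d) (by simp; omega)
          exact ⟨SimpleGraph.Walk.cons (grid_adj_vert a b _ (by simp; omega)) p, by simp; omega⟩
      · have hgt' : (a:ℕ)-1 < m := by omega
        obtain ⟨p, hp⟩ := ih (⟨(a:ℕ)-1, hgt'⟩, b) (c, d) (by simp; omega)
        exact ⟨SimpleGraph.Walk.cons (grid_adj_horiz a _ b (by simp; omega)) p, by simp; omega⟩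

lemma grid_dist_le_s14 {m n : ℕ} (u v : Fin m × Fin n) (k : ℕ)
    (h : ((u.1:ℕ) - v.1) + ((v.1:ℕ) - u.1) + (((u.2:ℕ) - v.2) + ((v.2:ℕ) - u.2)) ≤ k) :
    (gridGraph m n).dist u v ≤ k := by
  obtain ⟨p, hp⟩ := grid_walk k u v h
  exact le_trans (SimpleGraph.dist_le p) hp

def clampv (m n : ℕ) (hm : 0 < m) (hn : 0 < n) (p : ℕ × ℕ) : Fin m × Fin n :=
  (⟨min (p.1 - 1) (m - 1), by omega⟩, ⟨min (p.2 - 1) (n - 1), by omega⟩)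

lemma dist_clamp_le {m n : ℕ} (hm : 0 < m) (hn : 0 < n) (X Y : ℕ) (v : Fin m × Fin n) (D : ℕ)
    (h : (X - ((v.1:ℕ)+1)) + (((v.1:ℕ)+1) - X) + ((Y - ((v.2:ℕ)+1)) + (((v.2:ℕ)+1) - Y)) ≤ D) :
    (gridGraph m n).dist (clampv m n hm hn (X,Y)) v ≤ D := by
  apply grid_dist_le_s14
  have h1 : (v.1:ℕ) < m := v.1.isLt
  have h2 : (v.2:ℕ) < n := v.2.isLt
  simp only [clampv]
  omega

lemma clampv_ne_fst {m n : ℕ} (hm : 0 < m) (hn : 0 < n) {X1 Y1 X2 Y2 : ℕ}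
    (h : min (X1-1) (m-1) ≠ min (X2-1) (m-1)) :
    clampv m n hm hn (X1,Y1) ≠ clampv m n hm hn (X2,Y2) := by
  intro hEq
  exact h (congrArg (fun z : Fin m × Fin n => (z.1:ℕ)) hEq)

lemma clampv_ne_snd {m n : ℕ} (hm : 0 < m) (hn : 0 < n) {X1 Y1 X2 Y2 : ℕ}
    (h : min (Y1-1) (n-1) ≠ min (Y2-1) (n-1)) :
    clampv m n hm hn (X1,Y1) ≠ clampv m n hm hn (X2,Y2) := by
  intro hEq
  exact h (congrArg (fun z : Fin m × Fin n => (z.2:ℕ)) hEq)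

lemma isBroadcast_of {m n : ℕ} (S : Finset (Fin m × Fin n))
    (h : ∀ v, (∃ T ∈ S, (gridGraph m n).dist T v ≤ 1) ∨
      (∃ T₁ ∈ S, ∃ T₂ ∈ S, T₁ ≠ T₂ ∧ (gridGraph m n).dist T₁ v ≤ 2 ∧ (gridGraph m n).dist T₂ v ≤ 2)) :
    IsBroadcast (gridGraph m n) 3 S := by
  intro v
  rcases h v with ⟨T, hT, hd⟩ | ⟨T₁, h₁, T₂, h₂, hne, hd₁, hd₂⟩
  · calc 2 ≤ 3 - (gridGraph m n).dist T v := by omega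
    _ ≤ ∑ T ∈ S, (3 - (gridGraph m n).dist T v) :=
        Finset.single_le_sum (f := fun T => 3 - (gridGraph m n).dist T v) (fun i _ => Nat.zero_le _) hT
  · have h₂' : T₂ ∈ S.erase T₁ := Finset.mem_erase.mpr ⟨fun hEq => hne hEq.symm, h₂⟩
    have e : (3 - (gridGraph m n).dist T₁ v) + ∑ T ∈ S.erase T₁, (3 - (gridGraph m n).dist T v)
        = ∑ T ∈ S, (3 - (gridGraph m n).dist T v) := Finset.add_sum_erase S (fun T => 3 - (gridGraph m n).dist T v) h₁
    have e2 : (3 - (gridGraph m n).dist T₂ v) ≤ ∑ T ∈ S.erase T₁, (3 - (gridGraph m n).dist T v) :=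
      Finset.single_le_sum (f := fun T => 3 - (gridGraph m n).dist T v) (fun i _ => Nat.zero_le _) h₂'
    omega

lemma count_mod4 (t : ℕ) (ht : t < 4) : ∀ N : ℕ,
    ((Finset.range N).filter (fun y => y % 4 = t)).card = (N + 3 - t) / 4 := by
  intro N
  induction N with
  | zero => simp; omega
  | succ N ih =>
    rw [Finset.range_add_one, Finset.filter_insert]
    by_cases h : N % 4 = t
    · rw [if_pos h, Finset.card_insert_of_notMem (by simp)]
      omega
    · rw [if_neg h, ih]
      omega

lemma broadcastNumber_le {m n : ℕ} (S : Finset (Fin m × Fin n)) (hS : IsBroadcast (gridGraph m n) 3 S)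
    {k : ℕ} (hk : S.card ≤ k) : broadcastNumber (gridGraph m n) 3 ≤ k :=
  le_trans (Nat.sInf_le ⟨S, hS, rfl⟩) hk

lemma general2d {m n : ℕ} (hm : 2 ≤ m) (hn : 2 ≤ n) :
    broadcastNumber (gridGraph m n) 3 ≤ (m+2)*(n+2)/8 := by
  classical
  have hm0 : 0 < m := by omega
  have hn0 : 0 < n := by omega
  set box : Finset (ℕ×ℕ) := Finset.range (m+2) ×ˢ Finset.range (n+2) with hbox
  set key : ℕ×ℕ → ℕ×ℕ := fun p => (p.1 % 2, (4 - (3*p.1+p.2) % 4) % 4) with hkeydef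
  have hkey : ∀ p ∈ box, key p ∈ Finset.range 2 ×ˢ Finset.range 4 := by
    intro p _
    simp only [key, Finset.mem_product, Finset.mem_range]
    omega
  have hsum := Finset.card_eq_sum_card_fiberwise hkey
  have hboxcard : box.card = (m+2)*(n+2) := by
    simp [hbox]
  have hexists : ∃ k ∈ Finset.range 2 ×ˢ Finset.range 4,
      (box.filter (fun p => key p = k)).card ≤ (m+2)*(n+2)/8 := by
    by_contra hc
    push_neg at hc
    have hge : ∀ k ∈ Finset.range 2 ×ˢ Finset.range 4,
        (m+2)*(n+2)/8 + 1 ≤ (box.filter (fun p => key p = k)).card := fun k hk => hc k hk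
    have hle := Finset.card_nsmul_le_sum (Finset.range 2 ×ˢ Finset.range 4)
      (fun k => (box.filter (fun p => key p = k)).card) ((m+2)*(n+2)/8 + 1) hge
    have hKcard : (Finset.range 2 ×ˢ Finset.range 4).card = 8 := by simp
    rw [hKcard, smul_eq_mul] at hle
    rw [hboxcard] at hsum
    omega
  obtain ⟨⟨s, t⟩, hkmem, hcard⟩ := hexists
  have hst : s < 2 ∧ t < 4 := by
    simpa [Finset.mem_product] using hkmem
  set P := box.filter (fun p => (p.1 + s) % 2 = 0 ∧ (3*p.1 + p.2 + t) % 4 = 0) with hPdef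
  have hPeq : P = box.filter (fun p => key p = (s,t)) := by
    apply Finset.filter_congr
    intro p _
    simp only [key, Prod.mk.injEq, eq_iff_iff]
    constructor
    · rintro ⟨h1, h2⟩; omega
    · rintro ⟨h1, h2⟩; omega
  have hPcard : P.card ≤ (m+2)*(n+2)/8 := by rw [hPeq]; exact hcard
  set S := P.image (clampv m n hm0 hn0) with hSdef
  apply broadcastNumber_le S _ (le_trans Finset.card_image_le hPcard)
  apply isBroadcast_of
  intro v
  have ha1 : 1 ≤ (v.1:ℕ)+1 := by omega
  have ha2 : (v.1:ℕ)+1 ≤ m := v.1.isLt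
  have hb1 : 1 ≤ (v.2:ℕ)+1 := by omega
  have hb2 : (v.2:ℕ)+1 ≤ n := v.2.isLt
  set a := (v.1:ℕ)+1 with hadef
  set b := (v.2:ℕ)+1 with hbdef
  have hmem : ∀ X Y : ℕ, X < m+2 → Y < n+2 → (X+s)%2 = 0 → (3*X+Y+t)%4 = 0 →
      clampv m n hm0 hn0 (X,Y) ∈ S := by
    intro X Y h1 h2 h3 h4
    exact Finset.mem_image_of_mem _ (Finset.mem_filter.mpr
      ⟨Finset.mem_product.mpr ⟨Finset.mem_range.mpr h1, Finset.mem_range.mpr h2⟩, h3, h4⟩)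
  have hdist : ∀ X Y D : ℕ, (X - a) + (a - X) + ((Y - b) + (b - Y)) ≤ D →
      (gridGraph m n).dist (clampv m n hm0 hn0 (X,Y)) v ≤ D := by
    intro X Y D h
    exact dist_clamp_le hm0 hn0 X Y v D h
  have hp2 : (a+s)%2 = 0 ∨ (a+s)%2 = 1 := by omega
  have hd4 : (3*a+b+t)%4 = 0 ∨ (3*a+b+t)%4 = 1 ∨ (3*a+b+t)%4 = 2 ∨ (3*a+b+t)%4 = 3 := by omega
  rcases hp2 with hp | hp
  · rcases hd4 with hd | hd | hd | hd
    · -- p=0, d=0 : tower at (a,b)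
      exact Or.inl ⟨_, hmem a b (by omega) (by omega) (by omega) (by omega), hdist a b 1 (by omega)⟩
    · -- p=0, d=1 : tower at (a, b-1)
      exact Or.inl ⟨_, hmem a (b-1) (by omega) (by omega) (by omega) (by omega),
        hdist a (b-1) 1 (by omega)⟩
    · -- p=0, d=2 : two towers (a', b) and (a, b')
      rcases le_or_gt 2 a with h2a | h2a
      · rcases le_or_gt 2 b with h2b | h2b
        · exact Or.inr ⟨_, hmem (a-2) b (by omega) (by omega) (by omega) (by omega),
            _, hmem a (b-2) (by omega) (by omega) (by omega) (by omega),
            clampv_ne_fst hm0 hn0 (by omega),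
            hdist (a-2) b 2 (by omega), hdist a (b-2) 2 (by omega)⟩
        · exact Or.inr ⟨_, hmem (a-2) b (by omega) (by omega) (by omega) (by omega),
            _, hmem a (b+2) (by omega) (by omega) (by omega) (by omega),
            clampv_ne_fst hm0 hn0 (by omega),
            hdist (a-2) b 2 (by omega), hdist a (b+2) 2 (by omega)⟩
      · rcases le_or_gt 2 b with h2b | h2b
        · exact Or.inr ⟨_, hmem (a+2) b (by omega) (by omega) (by omega) (by omega),
            _, hmem a (b-2) (by omega) (by omega) (by omega) (by omega),
            clampv_ne_fst hm0 hn0 (by omega),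
            hdist (a+2) b 2 (by omega), hdist a (b-2) 2 (by omega)⟩
        · exact Or.inr ⟨_, hmem (a+2) b (by omega) (by omega) (by omega) (by omega),
            _, hmem a (b+2) (by omega) (by omega) (by omega) (by omega),
            clampv_ne_fst hm0 hn0 (by omega),
            hdist (a+2) b 2 (by omega), hdist a (b+2) 2 (by omega)⟩
    · -- p=0, d=3 : tower at (a, b+1)
      exact Or.inl ⟨_, hmem a (b+1) (by omega) (by omega) (by omega) (by omega),
        hdist a (b+1) 1 (by omega)⟩
  · rcases hd4 with hd | hd | hd | hd
    · -- p=1, d=0 : towers (a-1,b-1), (a+1,b+1)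
      exact Or.inr ⟨_, hmem (a-1) (b-1) (by omega) (by omega) (by omega) (by omega),
        _, hmem (a+1) (b+1) (by omega) (by omega) (by omega) (by omega),
        clampv_ne_fst hm0 hn0 (by omega),
        hdist (a-1) (b-1) 2 (by omega), hdist (a+1) (b+1) 2 (by omega)⟩
    · -- p=1, d=1 : tower at (a+1, b)
      exact Or.inl ⟨_, hmem (a+1) b (by omega) (by omega) (by omega) (by omega),
        hdist (a+1) b 1 (by omega)⟩
    · -- p=1, d=2 : towers (a-1,b+1), (a+1,b-1)
      exact Or.inr ⟨_, hmem (a-1) (b+1) (by omega) (by omega) (by omega) (by omega),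
        _, hmem (a+1) (b-1) (by omega) (by omega) (by omega) (by omega),
        clampv_ne_fst hm0 hn0 (by omega),
        hdist (a-1) (b+1) 2 (by omega), hdist (a+1) (b-1) 2 (by omega)⟩
    · -- p=1, d=3 : tower at (a-1, b)
      exact Or.inl ⟨_, hmem (a-1) b (by omega) (by omega) (by omega) (by omega),
        hdist (a-1) b 1 (by omega)⟩

lemma path1n {n : ℕ} (hn : 2 ≤ n) :
    broadcastNumber (gridGraph 1 n) 3 ≤ (1+2)*(n+2)/8 := by
  classical
  have hm0 : (0:ℕ) < 1 := one_pos
  have hn0 : 0 < n := by omega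
  set tc := if n % 4 = 0 then 1 else 2 with htcdef
  have htc : (n % 4 = 0 ∧ tc = 1) ∨ (¬ n % 4 = 0 ∧ tc = 2) := by
    by_cases h : n % 4 = 0 <;> simp [htcdef, h]
  set P := (Finset.range (n+2)).filter (fun Y => Y % 4 = tc) with hPdef
  set S := P.image (fun Y => clampv 1 n hm0 hn0 (1, Y)) with hSdef
  have hPcard : P.card = (n + 2 + 3 - tc) / 4 := count_mod4 tc (by omega) (n+2)
  apply broadcastNumber_le S _ (le_trans Finset.card_image_le (by rw [hPcard]; omega))
  apply isBroadcast_of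
  intro v
  have hv1 : (v.1:ℕ) = 0 := by have := v.1.isLt; omega
  have hb1 : 1 ≤ (v.2:ℕ)+1 := by omega
  have hb2 : (v.2:ℕ)+1 ≤ n := v.2.isLt
  set b := (v.2:ℕ)+1 with hbdef
  have hmem : ∀ Y : ℕ, Y < n+2 → Y % 4 = tc → clampv 1 n hm0 hn0 (1,Y) ∈ S := by
    intro Y h1 h2
    exact Finset.mem_image_of_mem _ (Finset.mem_filter.mpr ⟨Finset.mem_range.mpr h1, h2⟩)
  have hdist : ∀ Y D : ℕ, (Y - b) + (b - Y) ≤ D →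
      (gridGraph 1 n).dist (clampv 1 n hm0 hn0 (1,Y)) v ≤ D := by
    intro Y D h
    exact dist_clamp_le hm0 hn0 1 Y v D (by omega)
  have hr : (b + 4 - tc) % 4 = 0 ∨ (b + 4 - tc) % 4 = 1 ∨ (b + 4 - tc) % 4 = 2 ∨
      (b + 4 - tc) % 4 = 3 := by omega
  rcases hr with hd | hd | hd | hd
  · exact Or.inl ⟨_, hmem b (by omega) (by omega), hdist b 1 (by omega)⟩
  · exact Or.inl ⟨_, hmem (b-1) (by omega) (by omega), hdist (b-1) 1 (by omega)⟩
  · have hb2' : 2 ≤ b ∧ b ≤ n - 1 := by omega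
    exact Or.inr ⟨_, hmem (b-2) (by omega) (by omega), _, hmem (b+2) (by omega) (by omega),
      clampv_ne_snd hm0 hn0 (by omega), hdist (b-2) 2 (by omega), hdist (b+2) 2 (by omega)⟩
  · exact Or.inl ⟨_, hmem (b+1) (by omega) (by omega), hdist (b+1) 1 (by omega)⟩

lemma pathm1 {m : ℕ} (hm : 2 ≤ m) :
    broadcastNumber (gridGraph m 1) 3 ≤ (m+2)*(1+2)/8 := by
  classical
  have hn0 : (0:ℕ) < 1 := one_pos
  have hm0 : 0 < m := by omega
  set tc := if m % 4 = 0 then 1 else 2 with htcdef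
  have htc : (m % 4 = 0 ∧ tc = 1) ∨ (¬ m % 4 = 0 ∧ tc = 2) := by
    by_cases h : m % 4 = 0 <;> simp [htcdef, h]
  set P := (Finset.range (m+2)).filter (fun X => X % 4 = tc) with hPdef
  set S := P.image (fun X => clampv m 1 hm0 hn0 (X, 1)) with hSdef
  have hPcard : P.card = (m + 2 + 3 - tc) / 4 := count_mod4 tc (by omega) (m+2)
  apply broadcastNumber_le S _ (le_trans Finset.card_image_le (by rw [hPcard]; omega))
  apply isBroadcast_of
  intro v
  have hv2 : (v.2:ℕ) = 0 := by have := v.2.isLt; omega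
  have ha1 : 1 ≤ (v.1:ℕ)+1 := by omega
  have ha2 : (v.1:ℕ)+1 ≤ m := v.1.isLt
  set a := (v.1:ℕ)+1 with hadef
  have hmem : ∀ X : ℕ, X < m+2 → X % 4 = tc → clampv m 1 hm0 hn0 (X,1) ∈ S := by
    intro X h1 h2
    exact Finset.mem_image_of_mem _ (Finset.mem_filter.mpr ⟨Finset.mem_range.mpr h1, h2⟩)
  have hdist : ∀ X D : ℕ, (X - a) + (a - X) ≤ D →
      (gridGraph m 1).dist (clampv m 1 hm0 hn0 (X,1)) v ≤ D := by
    intro X D h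
    exact dist_clamp_le hm0 hn0 X 1 v D (by omega)
  have hr : (a + 4 - tc) % 4 = 0 ∨ (a + 4 - tc) % 4 = 1 ∨ (a + 4 - tc) % 4 = 2 ∨
      (a + 4 - tc) % 4 = 3 := by omega
  rcases hr with hd | hd | hd | hd
  · exact Or.inl ⟨_, hmem a (by omega) (by omega), hdist a 1 (by omega)⟩
  · exact Or.inl ⟨_, hmem (a-1) (by omega) (by omega), hdist (a-1) 1 (by omega)⟩
  · have ha2' : 2 ≤ a ∧ a ≤ m - 1 := by omega
    exact Or.inr ⟨_, hmem (a-2) (by omega) (by omega), _, hmem (a+2) (by omega) (by omega),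
      clampv_ne_fst hm0 hn0 (by omega), hdist (a-2) 2 (by omega), hdist (a+2) 2 (by omega)⟩
  · exact Or.inl ⟨_, hmem (a+1) (by omega) (by omega), hdist (a+1) 1 (by omega)⟩

lemma case11 : broadcastNumber (gridGraph 1 1) 3 ≤ (1+2)*(1+2)/8 := by
  have hm0 : (0:ℕ) < 1 := one_pos
  apply broadcastNumber_le {((0 : Fin 1), (0 : Fin 1))} _ (by simp)
  intro v
  have hv : v = ((0 : Fin 1), (0 : Fin 1)) := Subsingleton.elim _ _
  subst hv
  rw [Finset.sum_singleton, SimpleGraph.dist_self]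
  omega

theorem gamma_32_grid_upper (m n : ℕ) (hm : 0 < m) (hn : 0 < n) :
    broadcastNumber (gridGraph m n) 3 ≤ (m + 2) * (n + 2) / 8 := by
  rcases Nat.lt_or_ge m 2 with h1 | h1
  · have hm1 : m = 1 := by omega
    subst hm1
    rcases Nat.lt_or_ge n 2 with h2 | h2
    · have hn1 : n = 1 := by omega
      subst hn1
      exact case11
    · exact path1n h2
  · rcases Nat.lt_or_ge n 2 with h2 | h2
    · have hn1 : n = 1 := by omega
      subst hn1
      exact pathm1 h1
    · exact general2d h1 h2
end
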